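/- arXiv:2110.08150 — 5 statements merged into one kernel-verified Lean document; each statement's English description precedes it below -/
import Mathlib

section
/- Given M > 0, let β_k = 1/(k+2) and η_{k+1} := [β_{k+1}(1 − β_k² − M η_k²)/(β_k(1−β_k)(1 − M η_k²))]·η_k with 0 < η_0 < 1/√(2M). Then for all k, η_k ≥ η_0(1 − 2Mη_0²)/(1 − Mη_0²) > 0; in particular the limit η⋆ := lim η_k exists and is positive. -/
/-!
Since `(k+2)² = (k+1)(k+3) + 1`, the recursion rewrites as
`η_{k+1} = η_k − Mη_k³ / ((1 − Mη_k²)(k+1)(k+3))`. While `0 ≤ η_k ≤ η_0`, the decrement is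
nonnegative and, by monotonicity of `y ↦ My³/(1 − My²)`, at most `D/((k+1)(k+2))` with
`D = Mη_0³/(1 − Mη_0²)`. Summing the telescoping bounds `1/((k+1)(k+2))` keeps `η_k` above
`η_0 − D = η_0(1 − 2Mη_0²)/(1 − Mη_0²)`, which is positive when `2Mη_0² < 1`; so `η` is
antitone and bounded below by a positive constant.
-/

open Filter Topology

lemma recursion_step_eq_sub (k : ℕ) {M y : ℝ} (hy : M * y ^ 2 ≠ 1) :
    ((1 / ((k : ℝ) + 3)) * (1 - (1 / ((k : ℝ) + 2)) ^ 2 - M * y ^ 2) /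
        ((1 / ((k : ℝ) + 2)) * (1 - 1 / ((k : ℝ) + 2)) * (1 - M * y ^ 2))) * y =
      y - M * y ^ 3 / (1 - M * y ^ 2) / (((k : ℝ) + 1) * ((k : ℝ) + 3)) := by
  have hy' : 1 - M * y ^ 2 ≠ 0 := sub_ne_zero.mpr (Ne.symm hy)
  have hk : (k : ℝ) + 2 - 1 ≠ 0 := by rw [add_sub_assoc]; norm_num; positivity
  field_simp
  ring

lemma mul_cube_div_one_sub_mul_sq_le {M a b : ℝ} (hM : 0 ≤ M) (ha : 0 ≤ a) (hab : a ≤ b)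
    (hb : M * b ^ 2 < 1) : M * a ^ 3 / (1 - M * a ^ 2) ≤ M * b ^ 3 / (1 - M * b ^ 2) := by
  have hsq : M * a ^ 2 ≤ M * b ^ 2 := by gcongr
  have hb0 : 0 ≤ b := ha.trans hab
  exact div_le_div₀ (by positivity) (by gcongr) (by linarith) (by linarith)

lemma decrement_step_bounds (k : ℕ) {M b y : ℝ} (hM : 0 ≤ M) (hy : 0 ≤ y) (hyb : y ≤ b)
    (hb : M * b ^ 2 < 1) :
    y - M * b ^ 3 / (1 - M * b ^ 2) / (((k : ℝ) + 1) * ((k : ℝ) + 2)) ≤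
        y - M * y ^ 3 / (1 - M * y ^ 2) / (((k : ℝ) + 1) * ((k : ℝ) + 3)) ∧
      y - M * y ^ 3 / (1 - M * y ^ 2) / (((k : ℝ) + 1) * ((k : ℝ) + 3)) ≤ y := by
  have hy2 : M * y ^ 2 < 1 := by
    have : M * y ^ 2 ≤ M * b ^ 2 := by gcongr
    linarith
  have hdec : 0 ≤ M * y ^ 3 / (1 - M * y ^ 2) := div_nonneg (by positivity) (by linarith)
  refine ⟨sub_le_sub_left ?_ y, sub_le_self y (by positivity)⟩
  calc M * y ^ 3 / (1 - M * y ^ 2) / (((k : ℝ) + 1) * ((k : ℝ) + 3))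
      ≤ M * y ^ 3 / (1 - M * y ^ 2) / (((k : ℝ) + 1) * ((k : ℝ) + 2)) := by gcongr; linarith
    _ ≤ M * b ^ 3 / (1 - M * b ^ 2) / (((k : ℝ) + 1) * ((k : ℝ) + 2)) :=
      div_le_div_of_nonneg_right (mul_cube_div_one_sub_mul_sq_le hM hy hyb hb)
        (by positivity)

lemma telescoping_lower_bound {x : ℕ → ℝ} {D : ℝ} (hD : 0 ≤ D)
    (hstep : ∀ k : ℕ, x 0 - D ≤ x k → x k ≤ x 0 →
      x k - D / (((k : ℝ) + 1) * ((k : ℝ) + 2)) ≤ x (k + 1) ∧ x (k + 1) ≤ x k)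
    (k : ℕ) : x 0 - D + D / ((k : ℝ) + 1) ≤ x k ∧ x k ≤ x 0 := by
  induction k with
  | zero => simp
  | succ k ih =>
    obtain ⟨hlo, hhi⟩ := ih
    obtain ⟨hdec, hmono⟩ := hstep k (by linarith [(by positivity : 0 ≤ D / ((k : ℝ) + 1))]) hhi
    have htel : D / ((k : ℝ) + 1) - D / (((k : ℝ) + 1) * ((k : ℝ) + 2)) =
        D / (((k + 1 : ℕ) : ℝ) + 1) := by
      push_cast; field_simp; ring
    exact ⟨by linarith, hmono.trans hhi⟩

lemma antitone_and_sub_le_of_step {x : ℕ → ℝ} {D : ℝ} (hD : 0 ≤ D)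
    (hstep : ∀ k : ℕ, x 0 - D ≤ x k → x k ≤ x 0 →
      x k - D / (((k : ℝ) + 1) * ((k : ℝ) + 2)) ≤ x (k + 1) ∧ x (k + 1) ≤ x k) :
    Antitone x ∧ ∀ k, x 0 - D ≤ x k := by
  have hlower : ∀ k, x 0 - D ≤ x k := fun k => by
    linarith [(telescoping_lower_bound hD hstep k).1, (by positivity : 0 ≤ D / ((k : ℝ) + 1))]
  exact ⟨antitone_nat_of_succ_le fun k =>
    (hstep k (hlower k) (telescoping_lower_bound hD hstep k).2).2, hlower⟩

/-- With `0 < η_0 < 1/√(2M)`, the stepsize sequence is bounded below by the positive constant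
`η_0(1 − 2Mη_0²)/(1 − Mη_0²)`; in particular its limit exists and is positive. -/
theorem eta_sequence_positive_limit (M : ℝ) (hM : 0 < M) (η : ℕ → ℝ)
    (hη0 : 0 < η 0) (hη0' : η 0 < 1 / Real.sqrt (2 * M))
    (hrec : ∀ k : ℕ,
      η (k + 1) =
        ((1 / ((k : ℝ) + 3)) * (1 - (1 / ((k : ℝ) + 2)) ^ 2 - M * η k ^ 2) /
            ((1 / ((k : ℝ) + 2)) * (1 - 1 / ((k : ℝ) + 2)) * (1 - M * η k ^ 2))) * η k) :
    (∀ k : ℕ, η 0 * (1 - 2 * M * η 0 ^ 2) / (1 - M * η 0 ^ 2) ≤ η k) ∧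
      0 < η 0 * (1 - 2 * M * η 0 ^ 2) / (1 - M * η 0 ^ 2) ∧
      ∃ l : ℝ, 0 < l ∧ Tendsto η atTop (𝓝 l) := by
  have hsmall : 2 * M * η 0 ^ 2 < 1 := by
    have hsqrt : 0 < Real.sqrt (2 * M) := by positivity
    rw [lt_div_iff₀ hsqrt] at hη0'
    nlinarith [Real.sq_sqrt (by positivity : (0 : ℝ) ≤ 2 * M), mul_pos hη0 hsqrt]
  have hs : 0 < 1 - M * η 0 ^ 2 := by nlinarith
  set D := M * η 0 ^ 3 / (1 - M * η 0 ^ 2)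
  have hc_eq : η 0 * (1 - 2 * M * η 0 ^ 2) / (1 - M * η 0 ^ 2) = η 0 - D := by
    rw [eq_sub_iff_add_eq, ← add_div, div_eq_iff hs.ne']; ring
  have hc_pos : 0 < η 0 - D := by
    rw [← hc_eq]; exact div_pos (mul_pos hη0 (by linarith)) hs
  obtain ⟨hanti, hlower⟩ := antitone_and_sub_le_of_step (x := η) (D := D) (by positivity)
    fun k hlo hhi => by
      have hy : 0 ≤ η k := by linarith
      have hy2 : M * η k ^ 2 ≠ 1 := by
        have : M * η k ^ 2 ≤ M * η 0 ^ 2 := by gcongr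
        linarith
      rw [hrec k, recursion_step_eq_sub k hy2]
      exact decrement_step_bounds k hM.le hy hhi (by linarith)
  refine ⟨hc_eq ▸ hlower, hc_eq ▸ hc_pos, ⨅ k, η k, hc_pos.trans_le (le_ciInf hlower), ?_⟩
  exact tendsto_atTop_ciInf hanti ⟨η 0 - D, Set.forall_mem_range.mpr hlower⟩
end

section
/- Let G be monotone and L-Lipschitz on ℝ^p, and let {(x_k, y_k)} be generated by the anchored Popov scheme y_k = β_k x_0 + (1−β_k)x_k − η_k G(y_{k−1}), x_{k+1} = β_k x_0 + (1−β_k)x_k − η_k G(y_k), with b_{k+1} = b_k/(1−β_k), a_k = b_k η_k/(2β_k), M = 2L²(1+θ) for some θ > 0, and parameters satisfying Mη_k² + β_k² < 1, η_{k+1} < (1−β_k² − Mη_k²)β_{k+1}η_k/((1−Mη_k²)(1−β_k)β_k), and η_{k+1} ≤ β_{k+1}(1−β_k)/(Mβ_kη_k). Then the Lyapunov function V_k := a_k‖G(x_k)‖² + b_k⟨G(x_k), x_k − x_0⟩ + c_k L²‖x_k − y_{k−1}‖² satisfies V_k − V_{k+1} ≥ L²(θa_k/(Mη_k²) − c_{k+1})‖x_{k+1}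 − y_k‖² + L²(c_k − a_k)‖x_k − y_{k−1}‖². -/
open scoped InnerProductSpace

private lemma quad_nonneg' {A B C ee ww ew : ℝ} (hA : 0 ≤ A) (hC : 0 ≤ C)
    (hABC : B ^ 2 ≤ A * C) (hee : 0 ≤ ee) (hww : 0 ≤ ww)
    (hcs : ew ^ 2 ≤ ee * ww) :
    0 ≤ A * ee + 2 * B * ew + C * ww := by
  rcases le_or_gt 0 (B * ew) with h | h
  · nlinarith [mul_nonneg hA hee, mul_nonneg hC hww]
  · nlinarith [sq_nonneg (A * ee - C * ww), mul_nonneg hA hee, mul_nonneg hC hww,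
      mul_nonneg (mul_nonneg hA hC) (mul_nonneg hee hww),
      mul_le_mul hABC hcs (sq_nonneg ew) (mul_nonneg hA hC), sq_nonneg (B * ew)]

set_option maxHeartbeats 1000000 in
/-- One-iteration key estimate (Lemma 3.1) for the anchored Popov scheme.  Here `y (k+1)`
plays the role of the paper's `y_k` and `y 0 = x 0` encodes `y_{−1} := x_0`, so that
`x k - y k` is the paper's `x_k − y_{k−1}`. -/
theorem anchored_popov_key_estimate {p : ℕ}
    (G : EuclideanSpace ℝ (Fin p) → EuclideanSpace ℝ (Fin p))
    (L : ℝ) (hL : 0 < L)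
    (hmono : ∀ x y, 0 ≤ ⟪G x - G y, x - y⟫_ℝ)
    (hLip : ∀ x y, ‖G x - G y‖ ≤ L * ‖x - y‖)
    (θ M : ℝ) (hθ : 0 < θ) (hM : M = 2 * L ^ 2 * (1 + θ))
    (a b c β η : ℕ → ℝ)
    (hβ : ∀ k, β k ∈ Set.Ioo (0 : ℝ) 1) (hηpos : ∀ k, 0 < η k)
    (hbpos : ∀ k, 0 < b k) (hcpos : ∀ k, 0 < c k)
    (hb : ∀ k, b (k + 1) = b k / (1 - β k))
    (ha : ∀ k, a k = b k * η k / (2 * β k))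
    (hcond1 : ∀ k, η (k + 1) <
      (1 - β k ^ 2 - M * η k ^ 2) * β (k + 1) * η k /
        ((1 - M * η k ^ 2) * (1 - β k) * β k))
    (hcond2 : ∀ k, M * η k ^ 2 + β k ^ 2 < 1)
    (hcond3 : ∀ k, η (k + 1) ≤ β (k + 1) * (1 - β k) / (M * β k * η k))
    (x y : ℕ → EuclideanSpace ℝ (Fin p))
    (hy0 : y 0 = x 0)
    (hy : ∀ k : ℕ, y (k + 1) = β k • x 0 + (1 - β k) • x k - η k • G (y k))
    (hx : ∀ k : ℕ, x (k + 1) = β k • x 0 + (1 - β k) • x k - η k • G (y (k + 1)))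
    (V : ℕ → ℝ)
    (hV : ∀ k, V k = a k * ‖G (x k)‖ ^ 2 + b k * ⟪G (x k), x k - x 0⟫_ℝ +
      c k * L ^ 2 * ‖x k - y k‖ ^ 2) :
    ∀ k : ℕ,
      L ^ 2 * (θ * a k / (M * η k ^ 2) - c (k + 1)) * ‖x (k + 1) - y (k + 1)‖ ^ 2 +
        L ^ 2 * (c k - a k) * ‖x k - y k‖ ^ 2 ≤ V k - V (k + 1) := by
  intro k
  obtain ⟨hβ0, hβ1⟩ := hβ k
  obtain ⟨hβ0', hβ1'⟩ := hβ (k + 1)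
  have hηk := hηpos k
  have hηk1 := hηpos (k + 1)
  have hbk := hbpos k
  have hθ1 : (0:ℝ) < 1 + θ := by linarith
  have hMpos : 0 < M := by rw [hM]; positivity
  have hs : (0:ℝ) < 1 - β k := by linarith
  have hm : (0:ℝ) < M * η k ^ 2 := by positivity
  have hm1 : (0:ℝ) < 1 - M * η k ^ 2 := by nlinarith [hcond2 k, sq_nonneg (β k)]
  have hnum : (0:ℝ) < 1 - β k ^ 2 - M * η k ^ 2 := by nlinarith [hcond2 k]
  have hapos : 0 < a k := by rw [ha k]; positivity
  have hβne : β k ≠ 0 := ne_of_gt hβ0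
  have hβne' : β (k + 1) ≠ 0 := ne_of_gt hβ0'
  have hsne : (1:ℝ) - β k ≠ 0 := ne_of_gt hs
  have hθne : (1:ℝ) + θ ≠ 0 := ne_of_gt hθ1
  have hLne : L ≠ 0 := ne_of_gt hL
  have hηne : η k ≠ 0 := ne_of_gt hηk
  have hxk := hx k
  have hyk := hy k
  set u := G (x k) with hu
  set v := G (x (k + 1)) with hv
  set w := G (y (k + 1)) with hw
  set z := G (y k) with hz
  -- vector identities
  have hxy : x (k + 1) - y (k + 1) = η k • (z - w) := by rw [hxk, hyk]; module
  have hxx : x (k + 1) - x k = β k • (x 0 - x k) - η k • w := by rw [hxk]; module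
  have hx0E : x (k + 1) - x 0 = (1 - β k) • (x k - x 0) - η k • w := by rw [hxk]; module
  -- scalar identities
  have hn2 : ‖x (k + 1) - y (k + 1)‖ ^ 2 = η k ^ 2 * ‖z - w‖ ^ 2 := by
    rw [hxy, norm_smul, Real.norm_eq_abs, abs_of_pos hηk, mul_pow]
  have hDnE : ‖z - w‖ ^ 2 = ‖z‖ ^ 2 - 2 * ⟪w, z⟫_ℝ + ‖w‖ ^ 2 := by
    rw [norm_sub_sq_real, real_inner_comm]
  have hP' : ⟪v, x (k + 1) - x 0⟫_ℝ =
      (1 - β k) * ⟪v, x k - x 0⟫_ℝ - η k * ⟪v, w⟫_ℝ := by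
    rw [hx0E, inner_sub_right, real_inner_smul_right, real_inner_smul_right]
  -- parameter identities
  have haaE : b k * η k = 2 * β k * a k := by
    rw [ha k]; field_simp
  have haa1E : b k * η (k + 1) = 2 * β (k + 1) * (1 - β k) * a (k + 1) := by
    rw [ha (k + 1), hb k]; field_simp
  -- cleared parameter conditions
  have cleared3 : η (k + 1) * (M * β k * η k) ≤ β (k + 1) * (1 - β k) := by
    have h := hcond3 k
    rwa [le_div_iff₀ (by positivity)] at h
  have cleared1 : η (k + 1) * ((1 - M * η k ^ 2) * (1 - β k) * β k) ≤
      (1 - β k ^ 2 - M * η k ^ 2) * β (k + 1) * η k := by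
    have h := hcond1 k
    rw [lt_div_iff₀ (by positivity)] at h
    linarith
  -- PA : a_{k+1} * (M η_k²) ≤ a_k
  have PA : a (k + 1) * (M * η k ^ 2) ≤ a k := by
    have h3 := mul_le_mul_of_nonneg_left cleared3 (le_of_lt (mul_pos hbk hηk))
    have hz1 : (b k * η (k + 1) - 2 * β (k + 1) * (1 - β k) * a (k + 1)) *
        (M * η k ^ 2 * β k) = 0 := by
      rw [haa1E]; ring
    have hz2 : (b k * η k - 2 * β k * a k) * (β (k + 1) * (1 - β k)) = 0 := by
      rw [haaE]; ring
    have hpos23 : (0:ℝ) < 2 * β k * β (k + 1) * (1 - β k) := by positivity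
    by_contra hcon
    push_neg at hcon
    have h9 := mul_lt_mul_of_pos_left hcon hpos23
    linarith [h3, hz1, hz2, h9]
  -- D1 : a_{k+1} (1-β)² (1 - Mη²) ≤ a_k (1 - β² - Mη²)
  have D1 : a (k + 1) * (1 - β k) ^ 2 * (1 - M * η k ^ 2) ≤
      a k * (1 - β k ^ 2 - M * η k ^ 2) := by
    have h1b := mul_le_mul_of_nonneg_left cleared1 (le_of_lt hbk)
    have hz3 : (b k * η (k + 1) - 2 * β (k + 1) * (1 - β k) * a (k + 1)) *
        ((1 - M * η k ^ 2) * (1 - β k) * β k) = 0 := by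
      rw [haa1E]; ring
    have hz4 : (b k * η k - 2 * β k * a k) *
        ((1 - β k ^ 2 - M * η k ^ 2) * β (k + 1)) = 0 := by
      rw [haaE]; ring
    have hpos4 : (0:ℝ) < 2 * β k * β (k + 1) := by positivity
    by_contra hcon
    push_neg at hcon
    have h9 := mul_lt_mul_of_pos_left hcon hpos4
    linarith [h1b, hz3, hz4, h9]
  -- PC : a_{k+1} (1-β) ≤ a_k (1+β)
  have PC : a (k + 1) * (1 - β k) ≤ a k * (1 + β k) := by
    have hq : (0:ℝ) ≤ a k * β k ^ 2 * (M * η k ^ 2) := by positivity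
    have hposs1m : (0:ℝ) < (1 - β k) * (1 - M * η k ^ 2) := mul_pos hs hm1
    by_contra hcon
    push_neg at hcon
    have h9 := mul_lt_mul_of_pos_left hcon hposs1m
    linarith [D1, hq, h9]
  -- PB
  have PB : (a k - a (k + 1) * (1 - β k)) ^ 2 * (M * η k ^ 2) ≤
      (a k - a (k + 1) * (M * η k ^ 2)) * (a k * (1 + β k) - a (k + 1) * (1 - β k)) *
        (1 - β k) := by
    have h9 := mul_le_mul_of_nonneg_left D1 (le_of_lt hapos)
    linarith [h9]
  -- monotonicity fact
  have hmono1 : 0 ≤ - (β k * (⟪v, x k - x 0⟫_ℝ - ⟪u, x k - x 0⟫_ℝ)) -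
      η k * (⟪v, w⟫_ℝ - ⟪u, w⟫_ℝ) := by
    have h := hmono (x (k + 1)) (x k)
    rw [← hu, ← hv] at h
    rw [hxx] at h
    rw [inner_sub_right, real_inner_smul_right, real_inner_smul_right] at h
    have e0 : ⟪v - u, x 0 - x k⟫_ℝ = -(⟪v, x k - x 0⟫_ℝ - ⟪u, x k - x 0⟫_ℝ) := by
      rw [inner_sub_left]
      have e4 : (x 0 : EuclideanSpace ℝ (Fin p)) - x k = -(x k - x 0) := by abel
      rw [e4, inner_neg_right, inner_neg_right]; ring
    have e3 : ⟪v - u, w⟫_ℝ = ⟪v, w⟫_ℝ - ⟪u, w⟫_ℝ := by rw [inner_sub_left]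
    rw [e0, e3] at h
    linarith
  have F1 : 0 ≤ (1 - β k) * b k * (⟪u, x k - x 0⟫_ℝ - ⟪v, x k - x 0⟫_ℝ) +
      b k * η k * ⟪v, w⟫_ℝ - 2 * a k * ⟪v, w⟫_ℝ +
      2 * a k * (1 - β k) * ⟪u, w⟫_ℝ := by
    have g := mul_nonneg (mul_nonneg hs.le hbk.le) hmono1
    have hx5 : (b k * η k - 2 * β k * a k) *
        (⟪v, w⟫_ℝ - (1 - β k) * ⟪u, w⟫_ℝ) = 0 := by
      rw [haaE]; ring
    by_contra hcon
    push_neg at hcon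
    have h9 := mul_lt_mul_of_pos_left hcon hβ0
    linarith [g, hx5, h9]
  -- Lipschitz at (x_k, y_k)
  have hLip2 : ‖u‖ ^ 2 - 2 * ⟪u, z⟫_ℝ + ‖z‖ ^ 2 ≤ L ^ 2 * ‖x k - y k‖ ^ 2 := by
    have h := hLip (x k) (y k)
    rw [← hu, ← hz] at h
    have h2 : ‖u - z‖ ^ 2 ≤ (L * ‖x k - y k‖) ^ 2 :=
      pow_le_pow_left₀ (norm_nonneg (u - z)) h 2
    rw [norm_sub_sq_real] at h2
    linarith [h2, sq_nonneg (L * ‖x k - y k‖ - L * ‖x k - y k‖)]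
  -- Lipschitz at (x_{k+1}, y_{k+1})
  have hLip1 : 2 * (1 + θ) * (‖v‖ ^ 2 - 2 * ⟪v, w⟫_ℝ + ‖w‖ ^ 2) ≤
      (M * η k ^ 2) * (‖z‖ ^ 2 - 2 * ⟪w, z⟫_ℝ + ‖w‖ ^ 2) := by
    have h := hLip (x (k + 1)) (y (k + 1))
    rw [← hv, ← hw] at h
    have h2 : ‖v - w‖ ^ 2 ≤ (L * ‖x (k + 1) - y (k + 1)‖) ^ 2 :=
      pow_le_pow_left₀ (norm_nonneg (v - w)) h 2
    rw [norm_sub_sq_real, mul_pow, hn2, hDnE] at h2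
    rw [hM]
    have h3 := mul_le_mul_of_nonneg_left h2
      (by positivity : (0:ℝ) ≤ 2 * (1 + θ))
    linarith [h3]
  -- completed square
  have hE8 : 0 ≤ ‖u‖ ^ 2 - ⟪u, w⟫_ℝ - ⟪u, z⟫_ℝ +
      (‖w‖ ^ 2 + 2 * ⟪w, z⟫_ℝ + ‖z‖ ^ 2) / 4 := by
    have h0 : (0:ℝ) ≤ ‖u - (2:ℝ)⁻¹ • (w + z)‖ ^ 2 := sq_nonneg _
    rw [norm_sub_sq_real, real_inner_smul_right, inner_add_right, norm_smul,
      Real.norm_eq_abs, mul_pow, norm_add_sq_real] at h0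
    rw [abs_of_pos (by norm_num : (0:ℝ) < 2⁻¹)] at h0
    linarith [h0]
  -- Cauchy–Schwarz pieces for e = v - w against w
  have hee : 0 ≤ ‖v‖ ^ 2 - 2 * ⟪v, w⟫_ℝ + ‖w‖ ^ 2 := by
    have h0 := sq_nonneg ‖v - w‖
    rw [norm_sub_sq_real] at h0
    linarith
  have hcs : (⟪v, w⟫_ℝ - ‖w‖ ^ 2) ^ 2 ≤
      (‖v‖ ^ 2 - 2 * ⟪v, w⟫_ℝ + ‖w‖ ^ 2) * ‖w‖ ^ 2 := by
    have h := abs_real_inner_le_norm (v - w) w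
    have h2 := pow_le_pow_left₀ (abs_nonneg _) h 2
    rw [sq_abs, mul_pow, norm_sub_sq_real] at h2
    have h3 : ⟪v - w, w⟫_ℝ = ⟪v, w⟫_ℝ - ‖w‖ ^ 2 := by
      rw [inner_sub_left, real_inner_self_eq_norm_sq]
    rw [h3] at h2
    linarith [h2]
  -- quadratic form fact
  have G5body : 0 ≤ (a k - a (k + 1) * (M * η k ^ 2)) * (1 - β k) *
        (‖v‖ ^ 2 - 2 * ⟪v, w⟫_ℝ + ‖w‖ ^ 2) +
      2 * ((a k - a (k + 1) * (1 - β k)) * (M * η k ^ 2)) * (⟪v, w⟫_ℝ - ‖w‖ ^ 2) +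
      (a k * (1 + β k) - a (k + 1) * (1 - β k)) * (M * η k ^ 2) * ‖w‖ ^ 2 := by
    apply quad_nonneg'
    · exact mul_nonneg (by linarith [PA]) hs.le
    · exact mul_nonneg (by linarith [PC]) hm.le
    · have h9 := mul_le_mul_of_nonneg_right PB hm.le
      linarith [h9]
    · exact hee
    · positivity
    · exact hcs
  -- the main polynomial inequality
  have hGOALP : 0 ≤ (1 - β k) * (2 * (1 + θ)) *
        (a k * ‖u‖ ^ 2 + b k * ⟪u, x k - x 0⟫_ℝ - a (k + 1) * ‖v‖ ^ 2) -
      (2 * (1 + θ)) * b k * ((1 - β k) * ⟪v, x k - x 0⟫_ℝ - η k * ⟪v, w⟫_ℝ) +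
      (1 - β k) * (2 * (1 + θ)) * L ^ 2 * a k * ‖x k - y k‖ ^ 2 -
      (1 - β k) * θ * a k * (‖z‖ ^ 2 - 2 * ⟪w, z⟫_ℝ + ‖w‖ ^ 2) := by
    have G1 := mul_nonneg (by positivity : (0:ℝ) ≤ M * η k ^ 2 * (2 * (1 + θ))) F1
    have G2 := mul_nonneg
      (by positivity : (0:ℝ) ≤ M * η k ^ 2 * (1 - β k) * a k * (2 * (1 + θ)))
      (by linarith [hLip2] :
        (0:ℝ) ≤ L ^ 2 * ‖x k - y k‖ ^ 2 - (‖u‖ ^ 2 - 2 * ⟪u, z⟫_ℝ + ‖z‖ ^ 2))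
    have G3 := mul_nonneg
      (by positivity : (0:ℝ) ≤ M * η k ^ 2 * (1 - β k) * a k * (2 * (1 + θ))) hE8
    have G4 := mul_nonneg (by positivity : (0:ℝ) ≤ (1 - β k) * a k)
      (by linarith [hLip1] :
        (0:ℝ) ≤ (M * η k ^ 2) * (‖z‖ ^ 2 - 2 * ⟪w, z⟫_ℝ + ‖w‖ ^ 2) -
          2 * (1 + θ) * (‖v‖ ^ 2 - 2 * ⟪v, w⟫_ℝ + ‖w‖ ^ 2))
    have G5 := mul_nonneg (by positivity : (0:ℝ) ≤ 2 * (1 + θ)) G5body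
    by_contra hcon
    push_neg at hcon
    have h9 := mul_lt_mul_of_pos_left hcon hm
    linarith [G1, G2, G3, G4, G5, h9]
  -- conclude
  have hfin : V k - V (k + 1) -
      (L ^ 2 * (θ * a k / (M * η k ^ 2) - c (k + 1)) * ‖x (k + 1) - y (k + 1)‖ ^ 2 +
        L ^ 2 * (c k - a k) * ‖x k - y k‖ ^ 2) =
      ((1 - β k) * (2 * (1 + θ)) *
        (a k * ‖u‖ ^ 2 + b k * ⟪u, x k - x 0⟫_ℝ - a (k + 1) * ‖v‖ ^ 2) -
      (2 * (1 + θ)) * b k * ((1 - β k) * ⟪v, x k - x 0⟫_ℝ - η k * ⟪v, w⟫_ℝ) +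
      (1 - β k) * (2 * (1 + θ)) * L ^ 2 * a k * ‖x k - y k‖ ^ 2 -
      (1 - β k) * θ * a k * (‖z‖ ^ 2 - 2 * ⟪w, z⟫_ℝ + ‖w‖ ^ 2)) /
        ((1 - β k) * (2 * (1 + θ))) := by
    rw [hV k, hV (k + 1), ← hu, ← hv, hP', hn2, hDnE, hb k, hM]
    field_simp
    ring
  have hdiv : (0:ℝ) ≤ ((1 - β k) * (2 * (1 + θ)) *
        (a k * ‖u‖ ^ 2 + b k * ⟪u, x k - x 0⟫_ℝ - a (k + 1) * ‖v‖ ^ 2) -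
      (2 * (1 + θ)) * b k * ((1 - β k) * ⟪v, x k - x 0⟫_ℝ - η k * ⟪v, w⟫_ℝ) +
      (1 - β k) * (2 * (1 + θ)) * L ^ 2 * a k * ‖x k - y k‖ ^ 2 -
      (1 - β k) * θ * a k * (‖z‖ ^ 2 - 2 * ⟪w, z⟫_ℝ + ‖w‖ ^ 2)) /
        ((1 - β k) * (2 * (1 + θ))) :=
    div_nonneg hGOALP (by positivity)
  linarith [hfin, hdiv]
end

section
/- Let A, B be maximally monotone on ℝ^p with B single-valued and L-Lipschitz, and let {(x_k, y_k, u_k, v_k)} be generated by the splitting anchored extra-gradient scheme: v_k = u_k + β_k(u_0 − u_k) − η_k G_γ(x_k), y_k = J_{γB}(v_k), u_{k+1} = u_k + β_k(u_0 − u_k) − η_k G_γ(y_k), x_{k+1} = J_{γB}(u_{k+1}). Suppose b_{k+1} = b_k/(1−β_k), a_k = b_kη_k/(2β_k), M = (1+γL)²/γ², and η_{k+1} ≤ η_kβ_{k+1}(1−Mη_k²−β_k²)/((1−β_k)β_k(1−Mη_k²)), Mη_k² + β_k² < 1, η_{k+1} ≤ β_{k+1}(1−β_k)/(Mη_kβ_k).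 Then Ṽ_k := a_k‖G_γ(x_k)‖² + b_k⟨G_γ(x_k), x_k + γB(x_k) − u_0⟩ satisfies Ṽ_{k+1} ≤ Ṽ_k − (b_kγ/β_k)‖G_γ(x_{k+1}) − G_γ(x_k)‖². -/
open scoped InnerProductSpace

lemma inner_aux {p : ℕ} (d e f : EuclideanSpace ℝ (Fin p))
    (h1 : 0 ≤ ⟪d - f - e, e⟫_ℝ) (h2 : 0 ≤ ⟪f, d⟫_ℝ) :
    ‖d - e‖ ^ 2 ≤ ⟪d - e, d + f⟫_ℝ := by
  have hid : ⟪d - e, d + f⟫_ℝ - ‖d - e‖ ^ 2 = ⟪d - f - e, e⟫_ℝ + ⟪f, d⟫_ℝ := by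
    rw [← real_inner_self_eq_norm_sq]
    simp only [inner_sub_left, inner_sub_right, inner_add_right]
    rw [real_inner_comm f e, real_inner_comm f d]
    ring
  linarith

lemma Gmono {p : ℕ} (A : EuclideanSpace ℝ (Fin p) → Set (EuclideanSpace ℝ (Fin p)))
    (B : EuclideanSpace ℝ (Fin p) → EuclideanSpace ℝ (Fin p)) (γ : ℝ) (hγ : 0 < γ)
    (hAmono : ∀ x y u v, u ∈ A x → v ∈ A y → 0 ≤ ⟪u - v, x - y⟫_ℝ)
    (hBmono : ∀ x y, 0 ≤ ⟪B x - B y, x - y⟫_ℝ)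
    (JA : EuclideanSpace ℝ (Fin p) → EuclideanSpace ℝ (Fin p))
    (hJAres : ∀ u, (1 / γ) • (u - JA u) ∈ A (JA u))
    (Gγ : EuclideanSpace ℝ (Fin p) → EuclideanSpace ℝ (Fin p))
    (hG : ∀ x, Gγ x = (1 / γ) • (x - JA (x - γ • B x)))
    (x x' : EuclideanSpace ℝ (Fin p)) :
    γ * ‖Gγ x - Gγ x'‖ ^ 2 ≤ ⟪Gγ x - Gγ x', (x + γ • B x) - (x' + γ • B x')⟫_ℝ := by
  set w := JA (x - γ • B x) with hw
  set w' := JA (x' - γ • B x') with hw'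
  have hA := hAmono _ _ _ _ (hJAres (x - γ • B x)) (hJAres (x' - γ • B x'))
  rw [← smul_sub, real_inner_smul_left] at hA
  have hA' : 0 ≤ ⟪(x - x') - γ • (B x - B x') - (w - w'), w - w'⟫_ℝ := by
    have h2 : (0:ℝ) ≤ ⟪x - γ • B x - w - (x' - γ • B x' - w'), w - w'⟫_ℝ := by
      nlinarith [hA, one_div_pos.mpr hγ]
    rw [show x - γ • B x - w - (x' - γ • B x' - w') =
      (x - x') - γ • (B x - B x') - (w - w') by module] at h2
    exact h2
  have hB' : 0 ≤ ⟪γ • (B x - B x'), x - x'⟫_ℝ := by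
    rw [real_inner_smul_left]; exact mul_nonneg hγ.le (hBmono x x')
  have key := inner_aux (x - x') (w - w') (γ • (B x - B x')) hA' hB'
  have hGd : Gγ x - Gγ x' = (1/γ) • ((x - x') - (w - w')) := by
    rw [hG, hG, ← hw, ← hw']; module
  have harg : (x + γ • B x) - (x' + γ • B x') = (x - x') + γ • (B x - B x') := by module
  rw [hGd, harg, norm_smul, real_inner_smul_left, Real.norm_eq_abs,
    abs_of_pos (by positivity : (0:ℝ) < 1/γ)]
  calc γ * (1 / γ * ‖x - x' - (w - w')‖) ^ 2 = (1/γ) * ‖x - x' - (w - w')‖ ^ 2 := by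
        field_simp
    _ ≤ (1/γ) * ⟪x - x' - (w - w'), x - x' + γ • (B x - B x')⟫_ℝ := by
        apply mul_le_mul_of_nonneg_left key (by positivity)
set_option maxHeartbeats 1000000 in
/-- One-iteration key estimate (Lemma 4.2) for the splitting anchored extra-gradient scheme
applied to `0 ∈ A(x) + B(x)`, where `A` is maximally monotone (with firmly nonexpansive
resolvent `J_{γA}`), `B` is single-valued maximally monotone and `L`-Lipschitz, and
`G_γ(x) = (1/γ)(x − J_{γA}(x − γ B x))` is the forward-backward residual. -/
theorem splitting_aeg_key_estimate {p : ℕ}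
    (A : EuclideanSpace ℝ (Fin p) → Set (EuclideanSpace ℝ (Fin p)))
    (B : EuclideanSpace ℝ (Fin p) → EuclideanSpace ℝ (Fin p))
    (γ L : ℝ) (hγ : 0 < γ) (hL : 0 < L)
    (hAmono : ∀ x y u v, u ∈ A x → v ∈ A y → 0 ≤ ⟪u - v, x - y⟫_ℝ)
    (hBmono : ∀ x y, 0 ≤ ⟪B x - B y, x - y⟫_ℝ)
    (hBLip : ∀ x y, ‖B x - B y‖ ≤ L * ‖x - y‖)
    (JA JB : EuclideanSpace ℝ (Fin p) → EuclideanSpace ℝ (Fin p))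
    (hJAres : ∀ u, (1 / γ) • (u - JA u) ∈ A (JA u))
    (hJAfirm : ∀ u v, ‖JA u - JA v‖ ^ 2 ≤ ⟪JA u - JA v, u - v⟫_ℝ)
    (hJBres : ∀ u, JB u + γ • B (JB u) = u)
    (hJBnonexp : ∀ u v, ‖JB u - JB v‖ ≤ ‖u - v‖)
    (Gγ : EuclideanSpace ℝ (Fin p) → EuclideanSpace ℝ (Fin p))
    (hG : ∀ x, Gγ x = (1 / γ) • (x - JA (x - γ • B x)))
    (a b β η : ℕ → ℝ)
    (hβ : ∀ k, β k ∈ Set.Ioo (0 : ℝ) 1) (hηpos : ∀ k, 0 < η k)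
    (hbpos : ∀ k, 0 < b k)
    (hb : ∀ k, b (k + 1) = b k / (1 - β k))
    (ha : ∀ k, a k = b k * η k / (2 * β k))
    (M : ℝ) (hM : M = (1 + γ * L) ^ 2 / γ ^ 2)
    (hcond1 : ∀ k, η (k + 1) ≤
      η k * β (k + 1) * (1 - M * η k ^ 2 - β k ^ 2) / ((1 - β k) * β k * (1 - M * η k ^ 2)))
    (hcond2 : ∀ k, M * η k ^ 2 + β k ^ 2 < 1)
    (hcond3 : ∀ k, η (k + 1) ≤ β (k + 1) * (1 - β k) / (M * η k * β k))
    (x y u v : ℕ → EuclideanSpace ℝ (Fin p))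
    (hu0 : u 0 = x 0 + γ • B (x 0))
    (hx0 : x 0 = JB (u 0))
    (hv : ∀ k : ℕ, v k = u k + β k • (u 0 - u k) - η k • Gγ (x k))
    (hy : ∀ k : ℕ, y k = JB (v k))
    (hu : ∀ k : ℕ, u (k + 1) = u k + β k • (u 0 - u k) - η k • Gγ (y k))
    (hx : ∀ k : ℕ, x (k + 1) = JB (u (k + 1)))
    (V : ℕ → ℝ)
    (hV : ∀ k, V k = a k * ‖Gγ (x k)‖ ^ 2 +
      b k * ⟪Gγ (x k), x k + γ • B (x k) - u 0⟫_ℝ) :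
    ∀ k : ℕ, V (k + 1) ≤ V k - (b k * γ / β k) * ‖Gγ (x (k + 1)) - Gγ (x k)‖ ^ 2 := by
  intro k
  obtain ⟨hβ0, hβ1⟩ := hβ k
  obtain ⟨hβ0', hβ1'⟩ := hβ (k+1)
  have h1β : (0:ℝ) < 1 - β k := by linarith
  have hβne : β k ≠ 0 := ne_of_gt hβ0
  have hβne' : β (k+1) ≠ 0 := ne_of_gt hβ0'
  have h1βne : (1:ℝ) - β k ≠ 0 := ne_of_gt h1β
  have hη := hηpos k
  have hη' := hηpos (k+1)
  have hbk := hbpos k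
  have hbk1pos := hbpos (k+1)
  have hMpos : 0 < M := by rw [hM]; positivity
  have hspos : 0 < M * η k ^ 2 := mul_pos hMpos (pow_pos hη 2)
  have h1spos : 0 < 1 - M * η k ^ 2 := by nlinarith [sq_nonneg (β k), hcond2 k]
  -- basic algebraic relations
  have hbk1 : b (k+1) * (1 - β k) = b k := by rw [hb k]; field_simp
  have hak : 2 * β k * a k = b k * η k := by rw [ha k]; field_simp
  have hak1 : 2 * β (k+1) * a (k+1) = b (k+1) * η (k+1) := by rw [ha (k+1)]; field_simp
  have eq1 : 2 * ((1 - β k) * β (k+1)) * a (k+1) = b k * η (k+1) := by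
    linear_combination (1 - β k) * hak1 + η (k+1) * hbk1
  have hcond1' : η (k+1) * ((1 - β k) * β k * (1 - M * η k ^ 2)) ≤
      η k * β (k+1) * (1 - M * η k ^ 2 - β k ^ 2) :=
    (le_div_iff₀ (mul_pos (mul_pos h1β hβ0) h1spos)).mp (hcond1 k)
  -- structural facts
  have hxk : ∀ n, x n = JB (u n) := by
    intro n
    cases n with
    | zero => exact hx0
    | succ m => exact hx m
  have hxBu : ∀ n, x n + γ • B (x n) = u n := by
    intro n; rw [hxk n]; exact hJBres (u n)
  have hyBv : y k + γ • B (y k) = v k := by rw [hy k]; exact hJBres (v k)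
  have P1 := Gmono A B γ hγ hAmono hBmono JA hJAres Gγ hG
  -- key inequality 1 : quasi-cocoercivity along x-iterates
  have hQ : γ * ‖Gγ (x (k+1)) - Gγ (x k)‖ ^ 2 ≤
      ⟪Gγ (x (k+1)) - Gγ (x k), u (k+1) - u k⟫_ℝ := by
    have h := P1 (x (k+1)) (x k)
    rwa [hxBu (k+1), hxBu k] at h
  -- key inequality 2 : extragradient contraction
  have hED : ‖Gγ (x (k+1)) - Gγ (y k)‖ ^ 2 ≤ M * η k ^ 2 * ‖Gγ (x k) - Gγ (y k)‖ ^ 2 := by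
    have hE1 := P1 (x (k+1)) (y k)
    rw [hxBu (k+1), hyBv] at hE1
    rw [show u (k+1) - v k = η k • (Gγ (x k) - Gγ (y k)) from by rw [hu k, hv k]; module,
      real_inner_smul_right] at hE1
    have hcs := real_inner_le_norm (Gγ (x (k+1)) - Gγ (y k)) (Gγ (x k) - Gγ (y k))
    have h2 : γ * ‖Gγ (x (k+1)) - Gγ (y k)‖ ^ 2 ≤
        η k * (‖Gγ (x (k+1)) - Gγ (y k)‖ * ‖Gγ (x k) - Gγ (y k)‖) :=
      le_trans hE1 (mul_le_mul_of_nonneg_left hcs hη.le)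
    have hMγ : 1 ≤ M * γ ^ 2 := by
      rw [hM, div_mul_cancel₀]
      · nlinarith [mul_pos hγ hL]
      · positivity
    rcases eq_or_lt_of_le (norm_nonneg (Gγ (x (k+1)) - Gγ (y k))) with h0 | h0
    · have hnn : 0 ≤ M * η k ^ 2 * ‖Gγ (x k) - Gγ (y k)‖ ^ 2 :=
        mul_nonneg hspos.le (sq_nonneg _)
      rw [← h0]; simpa using hnn
    · have h3 : γ * ‖Gγ (x (k+1)) - Gγ (y k)‖ ≤ η k * ‖Gγ (x k) - Gγ (y k)‖ := by
        nlinarith [h2, h0]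
      nlinarith [mul_le_mul h3 h3 (by positivity) (by positivity), hMγ,
        sq_nonneg (η k * ‖Gγ (x k) - Gγ (y k)‖), mul_pos hγ hγ]
  -- scalar core inequality hW
  have hQlow : η k * β (k+1) * β k ^ 2 * (M * η k ^ 2) ≤
      (1 - β k) * (1 - M * η k ^ 2) *
        ((1 - β k) * β (k+1) * η k + 2 * β k * β (k+1) * η k - β k * η (k+1)) := by
    linarith [hcond1']
  have hQQpos : 0 < (1 - β k) * β (k+1) * η k + 2 * β k * β (k+1) * η k - β k * η (k+1) := by
    nlinarith [hQlow, mul_pos h1β h1spos,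
      mul_pos (mul_pos (mul_pos hη hβ0') (mul_pos hβ0 hβ0)) hspos]
  have h4 := mul_le_mul_of_nonneg_left hQlow
    (by positivity : (0:ℝ) ≤ 4 * β (k+1) * η k)
  have hquad : (2 * β k * β (k+1) * η k) ^ 2 * (M * η k ^ 2) ≤
      4 * ((1 - β k) * β (k+1) * η k + 2 * β k * β (k+1) * η k - β k * η (k+1)) *
        ((1 - β k) * β (k+1) * η k) * (1 - M * η k ^ 2) := by
    nlinarith [h4]
  have hAApos : (0:ℝ) < (1 - β k) * β (k+1) * η k := by positivity
  have ht2 := mul_le_mul_of_nonneg_left hED hAApos.le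
  have hW : 0 ≤ ((1 - β k) * β (k+1) * η k + 2 * β k * β (k+1) * η k - β k * η (k+1)) *
        ‖Gγ (x (k+1))‖ ^ 2
      + ((1 - β k) * β (k+1) * η k) * ‖Gγ (x k) - Gγ (y k)‖ ^ 2
      - (2 * β k * β (k+1) * η k) * (‖Gγ (x (k+1))‖ * ‖Gγ (x (k+1)) - Gγ (y k)‖)
      - ((1 - β k) * β (k+1) * η k) * ‖Gγ (x (k+1)) - Gγ (y k)‖ ^ 2 := by
    nlinarith [sq_nonneg (2 * ((1 - β k) * β (k+1) * η k + 2 * β k * β (k+1) * η k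
        - β k * η (k+1)) * ‖Gγ (x (k+1))‖
        - (2 * β k * β (k+1) * η k) * ‖Gγ (x (k+1)) - Gγ (y k)‖),
      ht2, hquad, hQQpos, hspos, mul_pos hQQpos hspos,
      sq_nonneg ‖Gγ (x (k+1)) - Gγ (y k)‖]
  have hCS := real_inner_le_norm (Gγ (x (k+1))) (Gγ (x (k+1)) - Gγ (y k))
  have hccP := mul_le_mul_of_nonneg_left hCS
    (by positivity : (0:ℝ) ≤ 2 * β k * β (k+1) * η k)
  have hpoly : (2 * β k * β (k+1) * η k) * ⟪Gγ (x (k+1)), Gγ (x (k+1)) - Gγ (y k)⟫_ℝ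
      + ((1 - β k) * β (k+1) * η k) * ‖Gγ (x (k+1)) - Gγ (y k)‖ ^ 2
      ≤ ((1 - β k) * β (k+1) * η k + 2 * β k * β (k+1) * η k - β k * η (k+1)) *
          ‖Gγ (x (k+1))‖ ^ 2
        + ((1 - β k) * β (k+1) * η k) * ‖Gγ (x k) - Gγ (y k)‖ ^ 2 := by
    linarith [hccP, hW]
  -- polarization identities
  have hpolY : ‖Gγ (x (k+1)) - Gγ (y k)‖ ^ 2 = ‖Gγ (x (k+1))‖ ^ 2
      - 2 * ⟪Gγ (x (k+1)), Gγ (y k)⟫_ℝ + ‖Gγ (y k)‖ ^ 2 :=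
    norm_sub_sq_real _ _
  have hpolZ : ‖Gγ (x k) - Gγ (y k)‖ ^ 2 = ‖Gγ (x k)‖ ^ 2
      - 2 * ⟪Gγ (x k), Gγ (y k)⟫_ℝ + ‖Gγ (y k)‖ ^ 2 :=
    norm_sub_sq_real _ _
  have hP : ⟪Gγ (x (k+1)), Gγ (x (k+1)) - Gγ (y k)⟫_ℝ
      = ‖Gγ (x (k+1))‖ ^ 2 - ⟪Gγ (x (k+1)), Gγ (y k)⟫_ℝ := by
    rw [inner_sub_right, real_inner_self_eq_norm_sq]
  have hbridge : (((1 - β k) * β (k+1) * η k) * ‖Gγ (x k)‖ ^ 2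
        + (2 * ((1 - β k) * β (k+1) * η k) + 2 * β k * β (k+1) * η k) *
            ⟪Gγ (x (k+1)), Gγ (y k)⟫_ℝ)
      - (β k * η (k+1) * ‖Gγ (x (k+1))‖ ^ 2
        + 2 * (((1 - β k) * β (k+1) * η k) * ⟪Gγ (x k), Gγ (y k)⟫_ℝ))
      = (((1 - β k) * β (k+1) * η k + 2 * β k * β (k+1) * η k - β k * η (k+1)) *
            ‖Gγ (x (k+1))‖ ^ 2
          + ((1 - β k) * β (k+1) * η k) * ‖Gγ (x k) - Gγ (y k)‖ ^ 2)
        - ((2 * β k * β (k+1) * η k) * ⟪Gγ (x (k+1)), Gγ (x (k+1)) - Gγ (y k)⟫_ℝ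
          + ((1 - β k) * β (k+1) * η k) * ‖Gγ (x (k+1)) - Gγ (y k)‖ ^ 2) := by
    linear_combination ((1 - β k) * β (k+1) * η k) * hpolY
      - ((1 - β k) * β (k+1) * η k) * hpolZ
      + (2 * β k * β (k+1) * η k) * hP
  have hG2s : β k * η (k+1) * ‖Gγ (x (k+1))‖ ^ 2
      + 2 * (((1 - β k) * β (k+1) * η k) * ⟪Gγ (x k), Gγ (y k)⟫_ℝ)
      ≤ ((1 - β k) * β (k+1) * η k) * ‖Gγ (x k)‖ ^ 2
        + (2 * ((1 - β k) * β (k+1) * η k) + 2 * β k * β (k+1) * η k) *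
            ⟪Gγ (x (k+1)), Gγ (y k)⟫_ℝ := by
    linarith [hpoly, hbridge]
  -- lift to the (a, b) coefficients
  have hbG2s := mul_le_mul_of_nonneg_left hG2s hbk.le
  have ebl : b k * (β k * η (k+1) * ‖Gγ (x (k+1))‖ ^ 2
        + 2 * (((1 - β k) * β (k+1) * η k) * ⟪Gγ (x k), Gγ (y k)⟫_ℝ))
      = 2 * ((1 - β k) * β (k+1)) * (β k * a (k+1) * ‖Gγ (x (k+1))‖ ^ 2
        + b k * (η k * ⟪Gγ (x k), Gγ (y k)⟫_ℝ)) := by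
    linear_combination (- β k * ‖Gγ (x (k+1))‖ ^ 2) * eq1
  have ebr : b k * (((1 - β k) * β (k+1) * η k) * ‖Gγ (x k)‖ ^ 2
        + (2 * ((1 - β k) * β (k+1) * η k) + 2 * β k * β (k+1) * η k) *
            ⟪Gγ (x (k+1)), Gγ (y k)⟫_ℝ)
      = 2 * ((1 - β k) * β (k+1)) * (β k * a k * ‖Gγ (x k)‖ ^ 2
        + b k * (η k * ⟪Gγ (x (k+1)), Gγ (y k)⟫_ℝ)
        + β k * (b (k+1) * (η k * ⟪Gγ (x (k+1)), Gγ (y k)⟫_ℝ))) := by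
    linear_combination (- (1 - β k) * β (k+1) * ‖Gγ (x k)‖ ^ 2) * hak
      - (2 * β k * β (k+1) * η k * ⟪Gγ (x (k+1)), Gγ (y k)⟫_ℝ) * hbk1
  have H : 2 * ((1 - β k) * β (k+1)) * (β k * a (k+1) * ‖Gγ (x (k+1))‖ ^ 2
        + b k * (η k * ⟪Gγ (x k), Gγ (y k)⟫_ℝ))
      ≤ 2 * ((1 - β k) * β (k+1)) * (β k * a k * ‖Gγ (x k)‖ ^ 2
        + b k * (η k * ⟪Gγ (x (k+1)), Gγ (y k)⟫_ℝ)
        + β k * (b (k+1) * (η k * ⟪Gγ (x (k+1)), Gγ (y k)⟫_ℝ))) := by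
    linarith [hbG2s, ebl, ebr]
  have hGoal2 := le_of_mul_le_mul_left H (by positivity : (0:ℝ) < 2 * ((1 - β k) * β (k+1)))
  -- value function identities
  have hVk : V k = a k * ‖Gγ (x k)‖ ^ 2 + b k * ⟪Gγ (x k), u k - u 0⟫_ℝ := by
    rw [hV k, show x k + γ • B (x k) - u 0 = u k - u 0 from by rw [hxBu k]]
  have hVk1 : V (k+1) = a (k+1) * ‖Gγ (x (k+1))‖ ^ 2
      + b (k+1) * ((1 - β k) * ⟪Gγ (x (k+1)), u k - u 0⟫_ℝ
        - η k * ⟪Gγ (x (k+1)), Gγ (y k)⟫_ℝ) := by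
    rw [hV (k+1), show x (k+1) + γ • B (x (k+1)) - u 0
        = (1 - β k) • (u k - u 0) - η k • Gγ (y k) from by rw [hxBu (k+1), hu k]; module,
      inner_sub_right, real_inner_smul_right, real_inner_smul_right]
  have hvec : β k • (u k - u 0) = -(u (k+1) - u k) - η k • Gγ (y k) := by
    rw [hu k]; module
  have h := congrArg (fun z => ⟪Gγ (x (k+1)) - Gγ (x k), z⟫_ℝ) hvec
  simp only [real_inner_smul_right, inner_sub_right, inner_neg_right] at h
  have hJ : ⟪Gγ (x (k+1)) - Gγ (x k), u k - u 0⟫_ℝ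
      = ⟪Gγ (x (k+1)), u k - u 0⟫_ℝ - ⟪Gγ (x k), u k - u 0⟫_ℝ := inner_sub_left _ _ _
  have hS3 : ⟪Gγ (x (k+1)) - Gγ (x k), Gγ (y k)⟫_ℝ
      = ⟪Gγ (x (k+1)), Gγ (y k)⟫_ℝ - ⟪Gγ (x k), Gγ (y k)⟫_ℝ := inner_sub_left _ _ _
  have h2a : ⟪Gγ (x (k+1)) - Gγ (x k), u k - u 0⟫_ℝ
      = ⟪Gγ (x (k+1)) - Gγ (x k), u k⟫_ℝ - ⟪Gγ (x (k+1)) - Gγ (x k), u 0⟫_ℝ :=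
    inner_sub_right _ _ _
  have h2b : ⟪Gγ (x (k+1)) - Gγ (x k), u (k+1) - u k⟫_ℝ
      = ⟪Gγ (x (k+1)) - Gγ (x k), u (k+1)⟫_ℝ - ⟪Gγ (x (k+1)) - Gγ (x k), u k⟫_ℝ :=
    inner_sub_right _ _ _
  have hfin_eq1 : β k * V (k+1) = β k * a (k+1) * ‖Gγ (x (k+1))‖ ^ 2
      + b k * (β k * ⟪Gγ (x k), u k - u 0⟫_ℝ)
      - b k * ⟪Gγ (x (k+1)) - Gγ (x k), u (k+1) - u k⟫_ℝ
      - b k * (η k * ⟪Gγ (x (k+1)), Gγ (y k)⟫_ℝ)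
      + b k * (η k * ⟪Gγ (x k), Gγ (y k)⟫_ℝ)
      - β k * (b (k+1) * (η k * ⟪Gγ (x (k+1)), Gγ (y k)⟫_ℝ)) := by
    linear_combination (β k) * hVk1 + (β k * ⟪Gγ (x (k+1)), u k - u 0⟫_ℝ) * hbk1
      + (b k) * h - (b k * β k) * hJ - (b k * η k) * hS3
      + (b k * β k) * h2a + (b k) * h2b
  have hfin_eq2 : β k * V k = β k * a k * ‖Gγ (x k)‖ ^ 2
      + b k * (β k * ⟪Gγ (x k), u k - u 0⟫_ℝ) := by
    linear_combination (β k) * hVk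
  have hQb := mul_le_mul_of_nonneg_left hQ hbk.le
  have hfin : β k * V (k+1) ≤ β k * V k - b k * γ * ‖Gγ (x (k+1)) - Gγ (x k)‖ ^ 2 := by
    linarith [hfin_eq1, hfin_eq2, hQb, hGoal2]
  have key : V k - b k * γ / β k * ‖Gγ (x (k+1)) - Gγ (x k)‖ ^ 2
      = (β k * V k - b k * γ * ‖Gγ (x (k+1)) - Gγ (x k)‖ ^ 2) / β k := by
    field_simp
  rw [key, le_div_iff₀ hβ0]
  linarith [hfin]
end

section
/- Under the splitting anchored extra-gradient method with β_k = 1/(k+2), η-update η_{k+1} = η_kβ_{k+1}(1−Mη_k²−β_k²)/((1−β_k)β_k(1−Mη_k²)), 0 < η_0 ≤ 1/√(3M), M = (1+γL)²/γ², applied to 0 ∈ A(x) + B(x) with A, B maximally monotone and B single-valued L-Lipschitz, the iterates satisfy ‖G_γ(x_k)‖² ≤ 4C⋆‖x_0 − x⋆‖²/(η⋆(k+1)(k+2)) and ∑_{i=0}^{k−1}(i+1)(i+2)‖G_γ(x_{i+1}) − G_γ(x_i)‖² ≤ C⋆‖x_0 − x⋆‖²/γ, where η⋆ = lim η_k > 0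 and C⋆ = M(η_0η⋆ + γ²)/η⋆. -/
open Filter Topology
open scoped InnerProductSpace

/-!
In the variable `u = x + γ B x` the method is the anchored extragradient method for
`F = G_γ ∘ J_{γB}`. Since `J_{γB}` and `J_{γA}` are firmly nonexpansive and
`γ F = J_{γB} - J_{γA} ∘ (2 J_{γB} - I)`, the operator `F` is `γ`-cocoercive, with zero
`u⋆ = x⋆ + γ B x⋆`. Three cocoercivity inequalities per step show that the energy
`η_k (k+1)(k+2)/2 ‖F u_k‖² + (k+1) ⟪F u_k, u_k - u_0⟫` decreases by at least
`γ (k+1)(k+2) ‖F u_{k+1} - F u_k‖²`: the step-size recursion is exactly what makes the gap a sum of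
squares. The step sizes decrease to a limit `η⋆ ≥ 5 η_0 / 8`, and bounding the inner product below
by `-‖F u_k‖ ‖u_0 - u⋆‖` turns the bound on the energy into both rates.
-/

/-- The step-size recursion reads `η (k + 1) = η k * etaRatio (1 / β_k) (M * η k ^ 2)`. -/
noncomputable def etaRatio (K m : ℝ) : ℝ :=
  1 / (K + 1) * (1 - m - (1 / K) ^ 2) / ((1 - 1 / K) * (1 / K) * (1 - m))

theorem etaRatio_eq {K m : ℝ} (hK : 2 ≤ K) (hm : m < 1) :
    etaRatio K m = 1 - m / ((1 - m) * ((K - 1) * (K + 1))) := by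
  have : K - 1 ≠ 0 := by linarith
  have : K + 1 ≠ 0 := by linarith
  have : K ≠ 0 := by linarith
  have : 1 - m ≠ 0 := by linarith
  unfold etaRatio
  field_simp
  ring

theorem etaRatio_le_one {K m : ℝ} (hK : 2 ≤ K) (hm0 : 0 ≤ m) (hm : m < 1) :
    etaRatio K m ≤ 1 := by
  rw [etaRatio_eq hK hm, sub_le_self_iff]
  have : 0 < (K - 1) * (K + 1) := by nlinarith
  have : 0 < 1 - m := by linarith
  positivity

theorem one_sub_le_etaRatio {K m : ℝ} (hK : 2 ≤ K) (hm : m ≤ 1 / 3) :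
    1 - 1 / (2 * ((K - 1) * (K + 1))) ≤ etaRatio K m := by
  have hP : 0 < (K - 1) * (K + 1) := by nlinarith
  rw [etaRatio_eq hK (by linarith), sub_le_sub_iff_left,
    div_le_div_iff₀ (mul_pos (by linarith) hP) (by positivity)]
  nlinarith

/-- `etaFloor 0 = 1`, and each step removes exactly the worst-case loss `1 / (2 (k+1) (k+3))`
of `one_sub_le_etaRatio`, so `η 0 * etaFloor k` bounds the step sizes from below. -/
noncomputable def etaFloor (k : ℕ) : ℝ := 5 / 8 + (1 / ((k : ℝ) + 1) + 1 / ((k : ℝ) + 2)) / 4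

theorem etaFloor_succ (k : ℕ) :
    etaFloor (k + 1) = etaFloor k - 1 / (2 * (((k : ℝ) + 2 - 1) * ((k : ℝ) + 2 + 1))) := by
  have : (k : ℝ) + 1 ≠ 0 := by positivity
  rw [etaFloor, etaFloor, show (k : ℝ) + 2 - 1 = k + 1 by ring]
  push_cast
  field_simp
  ring

theorem five_eighths_le_etaFloor (k : ℕ) : 5 / 8 ≤ etaFloor k :=
  le_add_of_nonneg_right (by positivity)

theorem etaFloor_le_one (k : ℕ) : etaFloor k ≤ 1 := by
  have hk : (0 : ℝ) ≤ k := k.cast_nonneg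
  have : 1 / ((k : ℝ) + 1) ≤ 1 := by rw [div_le_one (by linarith)]; linarith
  have : 1 / ((k : ℝ) + 2) ≤ 1 / 2 := by
    rw [div_le_div_iff₀ (by linarith) (by norm_num)]; linarith
  unfold etaFloor
  linarith

theorem eta_bounds {M : ℝ} {η : ℕ → ℝ} (hM : 0 ≤ M) (hη0 : 0 < η 0) (hm : M * η 0 ^ 2 ≤ 1 / 3)
    (hrec : ∀ k : ℕ, η (k + 1) = η k * etaRatio ((k : ℝ) + 2) (M * η k ^ 2)) (k : ℕ) :
    η 0 * etaFloor k ≤ η k ∧ η k ≤ η 0 := by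
  induction k with
  | zero => norm_num [etaFloor]
  | succ k ih =>
    obtain ⟨hlow, hup⟩ := ih
    have hpos : 0 < η k :=
      lt_of_lt_of_le (mul_pos hη0 (by linarith [five_eighths_le_etaFloor k])) hlow
    have hmk : M * η k ^ 2 ≤ 1 / 3 :=
      le_trans (mul_le_mul_of_nonneg_left (pow_le_pow_left₀ hpos.le hup 2) hM) hm
    have hK : (2 : ℝ) ≤ k + 2 := by linarith [k.cast_nonneg (α := ℝ)]
    have hle := mul_le_of_le_one_right hpos.le
      (etaRatio_le_one (m := M * η k ^ 2) hK (by positivity) (by linarith))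
    have hge := mul_le_mul_of_nonneg_left (one_sub_le_etaRatio hK hmk) hpos.le
    rw [← hrec] at hle hge
    refine ⟨?_, hle.trans hup⟩
    set δ := 1 / (2 * (((k : ℝ) + 2 - 1) * ((k : ℝ) + 2 + 1)))
    have hδ : 0 ≤ δ := div_nonneg zero_le_one (by nlinarith)
    have hδ1 : δ ≤ 1 := by rw [div_le_one (by nlinarith)]; nlinarith
    calc η 0 * etaFloor (k + 1) ≤ η 0 * etaFloor k * (1 - δ) := by
          rw [etaFloor_succ]; nlinarith [etaFloor_le_one k]
      _ ≤ η k * (1 - δ) := mul_le_mul_of_nonneg_right hlow (by linarith)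
      _ ≤ η (k + 1) := hge

theorem eta_pos {M : ℝ} {η : ℕ → ℝ} (hM : 0 ≤ M) (hη0 : 0 < η 0) (hm : M * η 0 ^ 2 ≤ 1 / 3)
    (hrec : ∀ k : ℕ, η (k + 1) = η k * etaRatio ((k : ℝ) + 2) (M * η k ^ 2)) (k : ℕ) :
    0 < η k :=
  lt_of_lt_of_le (mul_pos hη0 (by linarith [five_eighths_le_etaFloor k]))
    (eta_bounds hM hη0 hm hrec k).1

theorem mul_eta_sq_le {M : ℝ} {η : ℕ → ℝ} (hM : 0 ≤ M) (hη0 : 0 < η 0)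
    (hm : M * η 0 ^ 2 ≤ 1 / 3)
    (hrec : ∀ k : ℕ, η (k + 1) = η k * etaRatio ((k : ℝ) + 2) (M * η k ^ 2)) (k : ℕ) :
    M * η k ^ 2 ≤ 1 / 3 :=
  le_trans (mul_le_mul_of_nonneg_left (pow_le_pow_left₀ (eta_pos hM hη0 hm hrec k).le
    (eta_bounds hM hη0 hm hrec k).2 2) hM) hm

theorem eta_antitone {M : ℝ} {η : ℕ → ℝ} (hM : 0 ≤ M) (hη0 : 0 < η 0)
    (hm : M * η 0 ^ 2 ≤ 1 / 3)
    (hrec : ∀ k : ℕ, η (k + 1) = η k * etaRatio ((k : ℝ) + 2) (M * η k ^ 2)) :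
    Antitone η :=
  antitone_nat_of_succ_le fun k => by
    rw [hrec]
    exact mul_le_of_le_one_right (eta_pos hM hη0 hm hrec k).le <| etaRatio_le_one
      (by linarith [k.cast_nonneg (α := ℝ)]) (by positivity)
      (by linarith [mul_eta_sq_le hM hη0 hm hrec k])

theorem exists_pos_tendsto_eta {M : ℝ} {η : ℕ → ℝ} (hM : 0 ≤ M) (hη0 : 0 < η 0)
    (hm : M * η 0 ^ 2 ≤ 1 / 3)
    (hrec : ∀ k : ℕ, η (k + 1) = η k * etaRatio ((k : ℝ) + 2) (M * η k ^ 2)) :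
    ∃ ηs, 0 < ηs ∧ Tendsto η atTop (𝓝 ηs) ∧ ∀ k, ηs ≤ η k := by
  have hlow : ∀ k, η 0 * (5 / 8) ≤ η k := fun k =>
    (mul_le_mul_of_nonneg_left (five_eighths_le_etaFloor k) hη0.le).trans
      (eta_bounds hM hη0 hm hrec k).1
  have hbdd : BddBelow (Set.range η) := ⟨η 0 * (5 / 8), by rintro _ ⟨k, rfl⟩; exact hlow k⟩
  exact ⟨⨅ k, η k, lt_of_lt_of_le (by positivity) (le_ciInf hlow),
    tendsto_atTop_ciInf (eta_antitone hM hη0 hm hrec) hbdd, ciInf_le hbdd⟩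

theorem mul_sq_le_one_of_le_one_div_sqrt {c t : ℝ} (hc : 0 < c) (ht : 0 ≤ t)
    (h : t ≤ 1 / √c) : c * t ^ 2 ≤ 1 := by
  rw [le_div_iff₀ (Real.sqrt_pos.2 hc)] at h
  calc c * t ^ 2 = (t * √c) ^ 2 := by rw [mul_pow, Real.sq_sqrt hc.le, mul_comm]
    _ ≤ 1 := by nlinarith [Real.sqrt_nonneg c, mul_nonneg ht (Real.sqrt_nonneg c)]

theorem mul_sub_mul_sq_le_sq_div {ηs n c D r : ℝ} (hηs : 0 < ηs) (hn : 0 ≤ n) (hc : 0 < c) :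
    n * (D * r) - c * (ηs * (n * (n + 1) / 2)) * r ^ 2 ≤ D ^ 2 / (2 * c * ηs) := by
  rw [le_div_iff₀ (by positivity)]
  nlinarith [sq_nonneg (D - c * ηs * n * r),
    mul_nonneg (sq_nonneg (c * ηs)) (mul_nonneg hn (sq_nonneg r))]

section

variable {V : Type*} [NormedAddCommGroup V] [InnerProductSpace ℝ V]

def IsCocoercive (c : ℝ) (F : V → V) : Prop :=
  ∀ u v, c * ‖F u - F v‖ ^ 2 ≤ ⟪F u - F v, u - v⟫_ℝ

theorem IsCocoercive.mul_norm_sub_le {c : ℝ} {F : V → V} (hF : IsCocoercive c F) (u v : V) :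
    c * ‖F u - F v‖ ≤ ‖u - v‖ := by
  have h := (hF u v).trans (real_inner_le_norm _ _)
  rcases (norm_nonneg (F u - F v)).eq_or_lt with h0 | h0
  · rw [← h0, mul_zero]; exact norm_nonneg _
  · nlinarith

theorem IsCocoercive.sq_mul_norm_sub_sq_le {c : ℝ} {F : V → V} (hF : IsCocoercive c F)
    (hc : 0 ≤ c) (u v : V) : c ^ 2 * ‖F u - F v‖ ^ 2 ≤ ‖u - v‖ ^ 2 := by
  rw [← mul_pow]
  exact pow_le_pow_left₀ (by positivity) (hF.mul_norm_sub_le u v) 2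

theorem IsCocoercive.smul {c s : ℝ} {F : V → V} (hF : IsCocoercive c F) (hs : 0 < s) :
    IsCocoercive (c / s) (fun w => s • F w) := by
  intro u v
  rw [← smul_sub, norm_smul, real_inner_smul_left, Real.norm_of_nonneg hs.le]
  calc c / s * (s * ‖F u - F v‖) ^ 2 = s * (c * ‖F u - F v‖ ^ 2) := by field_simp
    _ ≤ s * ⟪F u - F v, u - v⟫_ℝ := mul_le_mul_of_nonneg_left (hF u v) hs.le

theorem isCocoercive_one_of_add_smul_monotone {γ : ℝ} {B J : V → V} (hγ : 0 ≤ γ)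
    (hB : ∀ x y, 0 ≤ ⟪B x - B y, x - y⟫_ℝ) (hJ : ∀ u, J u + γ • B (J u) = u) :
    IsCocoercive 1 J := by
  intro u v
  have huv : u - v = (J u - J v) + γ • (B (J u) - B (J v)) := by
    conv_lhs => rw [← hJ u, ← hJ v]
    module
  rw [one_mul, huv, inner_add_right, real_inner_smul_right, real_inner_self_eq_norm_sq,
    real_inner_comm]
  have := hB (J u) (J v)
  nlinarith

theorem IsCocoercive.sub_comp_reflection {J T : V → V} (hJ : IsCocoercive 1 J)
    (hT : IsCocoercive 1 T) : IsCocoercive 1 (fun w => J w - T (2 • J w - w)) := by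
  intro u v
  have hJuv := hJ u v
  have hTuv := hT (2 • J u - u) (2 • J v - v)
  have harg : (2 • J u - u) - (2 • J v - v) = (J u - J v) + (J u - J v) - (u - v) := by module
  have hdiff : J u - T (2 • J u - u) - (J v - T (2 • J v - v)) =
      (J u - J v) - (T (2 • J u - u) - T (2 • J v - v)) := by abel
  rw [harg] at hTuv
  rw [hdiff]
  generalize J u - J v = a at *
  generalize T (2 • J u - u) - T (2 • J v - v) = e at *
  generalize u - v = d at *
  rw [one_mul] at hJuv hTuv ⊢
  rw [norm_sub_sq_real, inner_sub_left]
  rw [inner_sub_right, inner_add_right, real_inner_comm a e] at hTuv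
  linarith

theorem eq_of_add_smul_eq_add_smul {γ : ℝ} {B : V → V} (hγ : 0 ≤ γ)
    (hB : ∀ x y, 0 ≤ ⟪B x - B y, x - y⟫_ℝ) {x z : V} (h : x + γ • B x = z + γ • B z) :
    x = z := by
  have hxz : x - z = γ • (B z - B x) := by
    rw [smul_sub, sub_eq_sub_iff_add_eq_add, h, add_comm]
  have hsq : ‖x - z‖ ^ 2 ≤ 0 := by
    have := hB x z
    rw [← real_inner_self_eq_norm_sq]
    nth_rewrite 2 [hxz]
    rw [real_inner_smul_right, ← neg_sub (B x), inner_neg_right, real_inner_comm]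
    nlinarith
  exact sub_eq_zero.1 (norm_eq_zero.1 (by nlinarith [norm_nonneg (x - z)]))

theorem isCocoercive_residual_comp_resolvent {γ : ℝ} {B J T : V → V} (hγ : 0 < γ)
    (hB : ∀ x y, 0 ≤ ⟪B x - B y, x - y⟫_ℝ) (hJ : ∀ u, J u + γ • B (J u) = u)
    (hT : IsCocoercive 1 T) :
    IsCocoercive γ (fun w => (1 / γ) • (J w - T (J w - γ • B (J w)))) := by
  have hrefl : ∀ w, J w - γ • B (J w) = 2 • J w - w := fun w => by
    linear_combination (norm := module) -(hJ w)
  simp_rw [hrefl]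
  simpa only [one_div_one_div] using
    ((isCocoercive_one_of_add_smul_monotone hγ.le hB hJ).sub_comp_reflection hT).smul
      (one_div_pos.2 hγ)

theorem resolvent_sub_smul_eq_self {γ : ℝ} {A : V → Set V} {B T : V → V} (hγ : γ ≠ 0)
    (hT : ∀ w z, T w = z ↔ (1 / γ) • (w - z) ∈ A z) {x : V} (hx : -(B x) ∈ A x) :
    T (x - γ • B x) = x :=
  (hT _ _).2 (by rwa [sub_sub_cancel_left, smul_neg, smul_smul, one_div_mul_cancel hγ, one_smul])

theorem norm_add_smul_sub_add_smul_le {γ L : ℝ} {B : V → V} (hγ : 0 ≤ γ)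
    (hB : ∀ x y, ‖B x - B y‖ ≤ L * ‖x - y‖) (x z : V) :
    ‖(x + γ • B x) - (z + γ • B z)‖ ≤ (1 + γ * L) * ‖x - z‖ := by
  rw [show (x + γ • B x) - (z + γ • B z) = (x - z) + γ • (B x - B z) by module]
  calc ‖(x - z) + γ • (B x - B z)‖ ≤ ‖x - z‖ + γ * ‖B x - B z‖ := by
        grw [norm_add_le, norm_smul, Real.norm_of_nonneg hγ]
    _ ≤ ‖x - z‖ + γ * (L * ‖x - z‖) := by grw [hB]
    _ = (1 + γ * L) * ‖x - z‖ := by ring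

noncomputable def aegEnergy (η n : ℝ) (g q : V) : ℝ :=
  η * (n * (n + 1) / 2) * ‖g‖ ^ 2 + n * ⟪g, q⟫_ℝ

theorem aegEnergy_step_of_inner {γ η M K : ℝ} (hγ : 0 < γ) (hη : 0 < η) (hK : 2 ≤ K)
    (hm : M * η ^ 2 ≤ 1 / 3) (hMγ : 1 ≤ M * γ ^ 2) {g d e q : V}
    (he : γ * ‖e‖ ^ 2 ≤ ⟪e, -(η • d)⟫_ℝ)
    (hde : γ * ‖d + e‖ ^ 2 ≤ ⟪d + e, -((1 / K) • q) - η • (g + d)⟫_ℝ)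
    (hlip : γ ^ 2 * ‖e‖ ^ 2 ≤ η ^ 2 * ‖d‖ ^ 2) :
    aegEnergy (η * etaRatio K (M * η ^ 2)) K (g + d + e) ((1 - 1 / K) • q - η • (g + d)) +
        γ * ((K - 1) * K) * ‖d + e‖ ^ 2 ≤
      aegEnergy η (K - 1) g q := by
  have hM : 0 < M := pos_of_mul_pos_left (by linarith) (sq_nonneg γ)
  have hK0 : 0 < K := by linarith
  have hK1 : 0 < K - 1 := by linarith
  have hmη : 0 < M * η ^ 2 := by positivity
  have hc : 0 < 1 - M * η ^ 2 := by linarith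
  -- the gap is an explicit nonnegative combination of the three slacks and three squares
  have gap : aegEnergy η (K - 1) g q -
      (aegEnergy (η * etaRatio K (M * η ^ 2)) K (g + d + e) ((1 - 1 / K) • q - η • (g + d)) +
        γ * ((K - 1) * K) * ‖d + e‖ ^ 2) =
      ((K - 1) * K) * (⟪d + e, -((1 / K) • q) - η • (g + d)⟫_ℝ - γ * ‖d + e‖ ^ 2) +
      (γ * M * η * ((K - 1) * K)) * (⟪e, -(η • d)⟫_ℝ - γ * ‖e‖ ^ 2) +
      ((K - 1) * K * (1 - M * η ^ 2) / (2 * η)) * (η ^ 2 * ‖d‖ ^ 2 - γ ^ 2 * ‖e‖ ^ 2) +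
      (K / (2 * M * η * (K - 1) * (1 - M * η ^ 2))) *
        ‖(M * η ^ 2) • (g + d) + (M * η ^ 2 - (1 - M * η ^ 2) * (K - 1)) • e‖ ^ 2 +
      (M * K * η * (K - 1) / 2) * ‖η • d + γ • e‖ ^ 2 +
      ((K - 1) * K * (M * γ ^ 2 - 1) / (2 * M * η)) * ‖e‖ ^ 2 := by
    obtain ⟨c, rfl⟩ : ∃ c, M = (1 - c) / η ^ 2 := ⟨1 - M * η ^ 2, by field_simp; ring⟩
    have hc0 : c ≠ 0 := by field_simp at hc; linarith
    have hc1 : 1 - c ≠ 0 := by field_simp at hmη; linarith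
    simp only [aegEnergy, etaRatio, ← real_inner_self_eq_norm_sq, inner_add_left,
      inner_add_right, inner_sub_right, inner_neg_right,
      real_inner_smul_left, real_inner_smul_right, real_inner_comm d g, real_inner_comm e g,
      real_inner_comm e d, real_inner_comm q g, real_inner_comm q d, real_inner_comm q e]
    field_simp [hK0.ne', hK1.ne', hη.ne', hc0, hc1, (by linarith : K + 1 ≠ 0)]
    ring
  rw [← sub_nonneg, gap]
  have := sub_nonneg.2 he
  have := sub_nonneg.2 hde
  have := sub_nonneg.2 hlip
  have := sub_nonneg.2 hMγ
  positivity

theorem aegEnergy_step {F : V → V} {γ η M K : ℝ} (hF : IsCocoercive γ F) (hγ : 0 < γ)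
    (hη : 0 < η) (hK : 2 ≤ K) (hm : M * η ^ 2 ≤ 1 / 3) (hMγ : 1 ≤ M * γ ^ 2) {u₀ u w z : V}
    (hw : w = u + (1 / K) • (u₀ - u) - η • F u) (hz : z = u + (1 / K) • (u₀ - u) - η • F w) :
    aegEnergy (η * etaRatio K (M * η ^ 2)) K (F z) (z - u₀) +
        γ * ((K - 1) * K) * ‖F z - F u‖ ^ 2 ≤
      aegEnergy η (K - 1) (F u) (u - u₀) := by
  have hzw : z - w = -(η • (F w - F u)) := by rw [hz, hw]; module
  have hzu : z - u = -((1 / K) • (u - u₀)) - η • (F u + (F w - F u)) := by rw [hz]; module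
  have hzq : (1 - 1 / K) • (u - u₀) - η • (F u + (F w - F u)) = z - u₀ := by rw [hz]; module
  have hsum : F u + (F w - F u) + (F z - F w) = F z := by abel
  have hdiff : F w - F u + (F z - F w) = F z - F u := by abel
  have he := hF z w
  have hde := hF z u
  have hlip := hF.sq_mul_norm_sub_sq_le hγ.le z w
  rw [hzw] at he hlip
  rw [hzu, ← hdiff] at hde
  rw [norm_neg, norm_smul, mul_pow, Real.norm_of_nonneg hη.le] at hlip
  simpa only [hsum, hzq, hdiff] using aegEnergy_step_of_inner hγ hη hK hm hMγ he hde hlip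

theorem aegEnergy_add_sum_le {F : V → V} {γ M : ℝ} {η : ℕ → ℝ} {u v : ℕ → V}
    (hF : IsCocoercive γ F) (hγ : 0 < γ) (hη : ∀ k, 0 < η k) (hm : ∀ k, M * η k ^ 2 ≤ 1 / 3)
    (hMγ : 1 ≤ M * γ ^ 2)
    (hrec : ∀ k : ℕ, η (k + 1) = η k * etaRatio ((k : ℝ) + 2) (M * η k ^ 2))
    (hv : ∀ k : ℕ, v k = u k + (1 / ((k : ℝ) + 2)) • (u 0 - u k) - η k • F (u k))
    (hu : ∀ k : ℕ, u (k + 1) = u k + (1 / ((k : ℝ) + 2)) • (u 0 - u k) - η k • F (v k))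
    (k : ℕ) :
    aegEnergy (η k) ((k : ℝ) + 1) (F (u k)) (u k - u 0) +
        γ * ∑ i ∈ Finset.range k, ((i : ℝ) + 1) * ((i : ℝ) + 2) * ‖F (u (i + 1)) - F (u i)‖ ^ 2 ≤
      η 0 * ‖F (u 0)‖ ^ 2 := by
  induction k with
  | zero => simp [aegEnergy]
  | succ k ih =>
    have hstep := aegEnergy_step hF hγ (hη k) (by linarith [k.cast_nonneg (α := ℝ)]) (hm k) hMγ
      (hv k) (hu k)
    rw [← hrec, show (k : ℝ) + 2 - 1 = k + 1 by ring] at hstep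
    rw [Finset.sum_range_succ]
    push_cast
    rw [show (k : ℝ) + 1 + 1 = k + 2 by ring]
    linarith

theorem aegEnergy_ge {F : V → V} {γ η n : ℝ} (hF : IsCocoercive γ F) (hγ : 0 ≤ γ) {u₀ u u' : V}
    (hu' : F u' = 0) (hn : 0 ≤ n) :
    η * (n * (n + 1) / 2) * ‖F u‖ ^ 2 - n * (‖u₀ - u'‖ * ‖F u‖) ≤
      aegEnergy η n (F u) (u - u₀) := by
  have hmono : 0 ≤ ⟪F u, u - u'⟫_ℝ := by
    have := hF u u'
    rw [hu', sub_zero] at this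
    exact le_trans (by positivity) this
  have hcs : -(‖u₀ - u'‖ * ‖F u‖) ≤ ⟪F u, u' - u₀⟫_ℝ := by
    rw [← norm_neg, neg_sub, mul_comm]
    exact neg_le_of_abs_le (abs_real_inner_le_norm _ _)
  have hsplit : ⟪F u, u - u₀⟫_ℝ = ⟪F u, u - u'⟫_ℝ + ⟪F u, u' - u₀⟫_ℝ := by
    rw [← inner_add_right, sub_add_sub_cancel]
  rw [aegEnergy, hsplit]
  nlinarith

theorem energy_lower_bound_add_sum_le {F : V → V} {γ M : ℝ} {η : ℕ → ℝ} {u v : ℕ → V} {u' : V}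
    (hF : IsCocoercive γ F) (hγ : 0 < γ) (hu' : F u' = 0) (hMγ : 1 ≤ M * γ ^ 2)
    (hη0 : 0 < η 0) (hm : M * η 0 ^ 2 ≤ 1 / 3)
    (hrec : ∀ k : ℕ, η (k + 1) = η k * etaRatio ((k : ℝ) + 2) (M * η k ^ 2))
    (hv : ∀ k : ℕ, v k = u k + (1 / ((k : ℝ) + 2)) • (u 0 - u k) - η k • F (u k))
    (hu : ∀ k : ℕ, u (k + 1) = u k + (1 / ((k : ℝ) + 2)) • (u 0 - u k) - η k • F (v k))
    {ηs : ℝ} (hηs : ∀ k, ηs ≤ η k) (k : ℕ) :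
    ηs * (((k : ℝ) + 1) * ((k : ℝ) + 1 + 1) / 2) * ‖F (u k)‖ ^ 2 -
        ((k : ℝ) + 1) * (‖u 0 - u'‖ * ‖F (u k)‖) +
      γ * ∑ i ∈ Finset.range k, ((i : ℝ) + 1) * ((i : ℝ) + 2) * ‖F (u (i + 1)) - F (u i)‖ ^ 2 ≤
    η 0 * ‖F (u 0)‖ ^ 2 := by
  have hM : 0 ≤ M := (pos_of_mul_pos_left (by linarith) (sq_nonneg γ)).le
  have hlow := aegEnergy_ge (η := η k) (n := (k : ℝ) + 1) (u₀ := u 0) (u := u k) hF hγ.le hu'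
    (by positivity)
  have htel := aegEnergy_add_sum_le hF hγ (eta_pos hM hη0 hm hrec)
    (mul_eta_sq_le hM hη0 hm hrec) hMγ hrec hv hu k
  have hηk : ηs * (((k : ℝ) + 1) * ((k : ℝ) + 1 + 1) / 2) * ‖F (u k)‖ ^ 2 ≤
      η k * (((k : ℝ) + 1) * ((k : ℝ) + 1 + 1) / 2) * ‖F (u k)‖ ^ 2 := by
    gcongr
    exact hηs k
  linarith

theorem anchoredExtragradient_rates {F : V → V} {γ M : ℝ} {η : ℕ → ℝ} {u v : ℕ → V} {u' : V}
    (hF : IsCocoercive γ F) (hγ : 0 < γ) (hu' : F u' = 0) (hMγ : 1 ≤ M * γ ^ 2)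
    (hη0 : 0 < η 0) (hm : M * η 0 ^ 2 ≤ 1 / 3)
    (hrec : ∀ k : ℕ, η (k + 1) = η k * etaRatio ((k : ℝ) + 2) (M * η k ^ 2))
    (hv : ∀ k : ℕ, v k = u k + (1 / ((k : ℝ) + 2)) • (u 0 - u k) - η k • F (u k))
    (hu : ∀ k : ℕ, u (k + 1) = u k + (1 / ((k : ℝ) + 2)) • (u 0 - u k) - η k • F (v k))
    {X : ℝ} (hX : ‖u 0 - u'‖ ^ 2 ≤ M * γ ^ 2 * X) :
    ∃ ηs : ℝ, 0 < ηs ∧ Tendsto η atTop (𝓝 ηs) ∧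
      (∀ k : ℕ, ‖F (u k)‖ ^ 2 ≤
        4 * (M * (η 0 * ηs + γ ^ 2) / ηs) * X / (ηs * ((k : ℝ) + 1) * ((k : ℝ) + 2))) ∧
      (∀ k : ℕ, ∑ i ∈ Finset.range k,
          ((i : ℝ) + 1) * ((i : ℝ) + 2) * ‖F (u (i + 1)) - F (u i)‖ ^ 2 ≤
        (M * (η 0 * ηs + γ ^ 2) / ηs) * X / γ) := by
  have hM : 0 ≤ M := (pos_of_mul_pos_left (by linarith) (sq_nonneg γ)).le
  obtain ⟨ηs, hηs, hlim, hηs_le⟩ := exists_pos_tendsto_eta hM hη0 hm hrec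
  have hbound := energy_lower_bound_add_sum_le hF hγ hu' hMγ hη0 hm hrec hv hu hηs_le
  have hsum : ∀ k : ℕ, 0 ≤ ∑ i ∈ Finset.range k,
      ((i : ℝ) + 1) * ((i : ℝ) + 2) * ‖F (u (i + 1)) - F (u i)‖ ^ 2 := fun k =>
    Finset.sum_nonneg fun i _ => by positivity
  have hres0 : ‖F (u 0)‖ ^ 2 ≤ M * X := by
    have := hF.sq_mul_norm_sub_sq_le hγ.le (u 0) u'
    rw [hu', sub_zero] at this
    exact le_of_mul_le_mul_left (by linarith) (by positivity : 0 < γ ^ 2)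
  have hC : η 0 * ‖F (u 0)‖ ^ 2 + ‖u 0 - u'‖ ^ 2 / ηs ≤ M * (η 0 * ηs + γ ^ 2) / ηs * X :=
    calc _ ≤ η 0 * (M * X) + M * γ ^ 2 * X / ηs := by gcongr
      _ = _ := by field_simp
  refine ⟨ηs, hηs, hlim, fun k => ?_, fun k => ?_⟩
  · have hgap := mul_sub_mul_sq_le_sq_div (D := ‖u 0 - u'‖) (r := ‖F (u k)‖) hηs
      (by positivity : (0 : ℝ) ≤ k + 1) (by norm_num : (0 : ℝ) < 1 / 2)
    rw [le_div_iff₀ (by positivity)]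
    norm_num at hgap
    nlinarith [hbound k, hsum k]
  · have hgap := mul_sub_mul_sq_le_sq_div (D := ‖u 0 - u'‖) (r := ‖F (u k)‖) hηs
      (by positivity : (0 : ℝ) ≤ k + 1) zero_lt_one
    have : ‖u 0 - u'‖ ^ 2 / (2 * 1 * ηs) ≤ ‖u 0 - u'‖ ^ 2 / ηs := by
      gcongr; linarith
    rw [le_div_iff₀ hγ]
    linarith [hbound k]

end

theorem splitting_aeg_convergence_general {p : ℕ}
    (A : EuclideanSpace ℝ (Fin p) → Set (EuclideanSpace ℝ (Fin p)))
    (B : EuclideanSpace ℝ (Fin p) → EuclideanSpace ℝ (Fin p))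
    (γ L : ℝ) (hγ : 0 < γ) (hL : 0 < L)
    (hBmono : ∀ x y, 0 ≤ ⟪B x - B y, x - y⟫_ℝ)
    (hBLip : ∀ x y, ‖B x - B y‖ ≤ L * ‖x - y‖)
    (JA JB : EuclideanSpace ℝ (Fin p) → EuclideanSpace ℝ (Fin p))
    (hJA : ∀ w z, JA w = z ↔ (1 / γ) • (w - z) ∈ A z)
    (hJAfirm : ∀ u v, ‖JA u - JA v‖ ^ 2 ≤ ⟪JA u - JA v, u - v⟫_ℝ)
    (hJBres : ∀ u, JB u + γ • B (JB u) = u)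
    (Gγ : EuclideanSpace ℝ (Fin p) → EuclideanSpace ℝ (Fin p))
    (hG : ∀ x, Gγ x = (1 / γ) • (x - JA (x - γ • B x)))
    (xstar : EuclideanSpace ℝ (Fin p)) (hstar : -(B xstar) ∈ A xstar)
    (M : ℝ) (hM : M = (1 + γ * L) ^ 2 / γ ^ 2)
    (η : ℕ → ℝ) (hη0 : 0 < η 0) (hη0' : η 0 ≤ 1 / Real.sqrt (3 * M))
    (hrec : ∀ k : ℕ,
      η (k + 1) =
        η k * (1 / ((k : ℝ) + 3)) * (1 - M * η k ^ 2 - (1 / ((k : ℝ) + 2)) ^ 2) /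
          ((1 - 1 / ((k : ℝ) + 2)) * (1 / ((k : ℝ) + 2)) * (1 - M * η k ^ 2)))
    (x y u v : ℕ → EuclideanSpace ℝ (Fin p))
    (hu0 : u 0 = x 0 + γ • B (x 0))
    (hx0 : x 0 = JB (u 0))
    (hv : ∀ k : ℕ, v k = u k + (1 / ((k : ℝ) + 2)) • (u 0 - u k) - η k • Gγ (x k))
    (hy : ∀ k : ℕ, y k = JB (v k))
    (hu : ∀ k : ℕ, u (k + 1) = u k + (1 / ((k : ℝ) + 2)) • (u 0 - u k) - η k • Gγ (y k))
    (hx : ∀ k : ℕ, x (k + 1) = JB (u (k + 1))) :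
    ∃ ηs : ℝ, 0 < ηs ∧ Tendsto η atTop (𝓝 ηs) ∧
      (∀ k : ℕ,
        ‖Gγ (x k)‖ ^ 2 ≤
          4 * (M * (η 0 * ηs + γ ^ 2) / ηs) * ‖x 0 - xstar‖ ^ 2 /
            (ηs * ((k : ℝ) + 1) * ((k : ℝ) + 2))) ∧
      (∀ k : ℕ,
        ∑ i ∈ Finset.range k,
            ((i : ℝ) + 1) * ((i : ℝ) + 2) * ‖Gγ (x (i + 1)) - Gγ (x i)‖ ^ 2 ≤
          (M * (η 0 * ηs + γ ^ 2) / ηs) * ‖x 0 - xstar‖ ^ 2 / γ) := by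
  have hMγ : M * γ ^ 2 = (1 + γ * L) ^ 2 := by rw [hM]; field_simp
  have hMγ1 : 1 ≤ M * γ ^ 2 := by rw [hMγ]; nlinarith [mul_pos hγ hL]
  have hm : M * η 0 ^ 2 ≤ 1 / 3 := by
    linarith [mul_sq_le_one_of_le_one_div_sqrt (by rw [hM]; positivity) hη0.le hη0']
  have hrec' : ∀ k : ℕ, η (k + 1) = η k * etaRatio ((k : ℝ) + 2) (M * η k ^ 2) := fun k => by
    rw [hrec, etaRatio]; ring
  set ustar := xstar + γ • B xstar
  have hF : IsCocoercive γ (fun w => Gγ (JB w)) := by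
    simp_rw [hG]
    exact isCocoercive_residual_comp_resolvent hγ hBmono hJBres fun u v => by
      simpa only [one_mul] using hJAfirm u v
  have hzero : Gγ (JB ustar) = 0 := by
    rw [eq_of_add_smul_eq_add_smul hγ.le hBmono (hJBres ustar), hG,
      resolvent_sub_smul_eq_self hγ.ne' hJA hstar, sub_self, smul_zero]
  have hdist : ‖u 0 - ustar‖ ^ 2 ≤ M * γ ^ 2 * ‖x 0 - xstar‖ ^ 2 := by
    rw [hu0, hMγ, ← mul_pow]
    exact pow_le_pow_left₀ (norm_nonneg _) (norm_add_smul_sub_add_smul_le hγ.le hBLip _ _) 2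
  have hxk : ∀ k, x k = JB (u k) := fun k => by cases k; exacts [hx0, hx _]
  simpa only [← hxk] using anchoredExtragradient_rates (u := u) (v := v) hF hγ hzero hMγ1 hη0 hm
    hrec' (fun k => by rw [hv, hxk]) (fun k => by rw [hu, hy]) hdist

/-- Convergence rates (Theorem 4.3) of the splitting anchored extra-gradient method with
`β_k = 1/(k+2)`, `M = (1+γL)²/γ²` and `0 < η_0 ≤ 1/√(3M)`:
`‖G_γ(x_k)‖² ≤ 4C⋆‖x_0 − x⋆‖²/(η⋆(k+1)(k+2))` and
`∑_{i<k}(i+1)(i+2)‖G_γ(x_{i+1}) − G_γ(x_i)‖² ≤ C⋆‖x_0 − x⋆‖²/γ`,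
with `C⋆ = M(η_0η⋆ + γ²)/η⋆` and `η⋆ = lim η_k > 0`. -/
theorem splitting_aeg_convergence {p : ℕ}
    (A : EuclideanSpace ℝ (Fin p) → Set (EuclideanSpace ℝ (Fin p)))
    (B : EuclideanSpace ℝ (Fin p) → EuclideanSpace ℝ (Fin p))
    (γ L : ℝ) (hγ : 0 < γ) (hL : 0 < L)
    (hAmono : ∀ x y u v, u ∈ A x → v ∈ A y → 0 ≤ ⟪u - v, x - y⟫_ℝ)
    (hBmono : ∀ x y, 0 ≤ ⟪B x - B y, x - y⟫_ℝ)
    (hBLip : ∀ x y, ‖B x - B y‖ ≤ L * ‖x - y‖)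
    (JA JB : EuclideanSpace ℝ (Fin p) → EuclideanSpace ℝ (Fin p))
    (hJA : ∀ w z, JA w = z ↔ (1 / γ) • (w - z) ∈ A z)
    (hJAfirm : ∀ u v, ‖JA u - JA v‖ ^ 2 ≤ ⟪JA u - JA v, u - v⟫_ℝ)
    (hJBres : ∀ u, JB u + γ • B (JB u) = u)
    (hJBnonexp : ∀ u v, ‖JB u - JB v‖ ≤ ‖u - v‖)
    (Gγ : EuclideanSpace ℝ (Fin p) → EuclideanSpace ℝ (Fin p))
    (hG : ∀ x, Gγ x = (1 / γ) • (x - JA (x - γ • B x)))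
    (xstar : EuclideanSpace ℝ (Fin p)) (hstar : -(B xstar) ∈ A xstar)
    (M : ℝ) (hM : M = (1 + γ * L) ^ 2 / γ ^ 2)
    (η : ℕ → ℝ) (hη0 : 0 < η 0) (hη0' : η 0 ≤ 1 / Real.sqrt (3 * M))
    (hrec : ∀ k : ℕ,
      η (k + 1) =
        η k * (1 / ((k : ℝ) + 3)) * (1 - M * η k ^ 2 - (1 / ((k : ℝ) + 2)) ^ 2) /
          ((1 - 1 / ((k : ℝ) + 2)) * (1 / ((k : ℝ) + 2)) * (1 - M * η k ^ 2)))
    (x y u v : ℕ → EuclideanSpace ℝ (Fin p))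
    (hu0 : u 0 = x 0 + γ • B (x 0))
    (hx0 : x 0 = JB (u 0))
    (hv : ∀ k : ℕ, v k = u k + (1 / ((k : ℝ) + 2)) • (u 0 - u k) - η k • Gγ (x k))
    (hy : ∀ k : ℕ, y k = JB (v k))
    (hu : ∀ k : ℕ, u (k + 1) = u k + (1 / ((k : ℝ) + 2)) • (u 0 - u k) - η k • Gγ (y k))
    (hx : ∀ k : ℕ, x (k + 1) = JB (u (k + 1))) :
    ∃ ηs : ℝ, 0 < ηs ∧ Tendsto η atTop (𝓝 ηs) ∧
      (∀ k : ℕ,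
        ‖Gγ (x k)‖ ^ 2 ≤
          4 * (M * (η 0 * ηs + γ ^ 2) / ηs) * ‖x 0 - xstar‖ ^ 2 /
            (ηs * ((k : ℝ) + 1) * ((k : ℝ) + 2))) ∧
      (∀ k : ℕ,
        ∑ i ∈ Finset.range k,
            ((i : ℝ) + 1) * ((i : ℝ) + 2) * ‖Gγ (x (i + 1)) - Gγ (x i)‖ ^ 2 ≤
          (M * (η 0 * ηs + γ ^ 2) / ηs) * ‖x 0 - xstar‖ ^ 2 / γ) :=
  splitting_aeg_convergence_general A B γ L hγ hL hBmono hBLip JA JB hJA hJAfirm hJBres Gγ hG xstar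
    hstar M hM η hη0 hη0' hrec x y u v hu0 hx0 hv hy hu hx
end

section
/- Let A, B be maximally monotone on ℝ^p with B single-valued, γ > 0, and consider the accelerated Douglas–Rachford iteration u_{k+1} = u_k + β_k(u_0 − u_k) − η_k G_γ(x_k), x_{k+1} = J_{γB}(u_{k+1}), with x_k = J_{γB}(u_k). If β_k ∈ (0,1), b_{k+1} = b_k/(1−β_k), a_k = b_kη_k/(2β_k), 2γ(1−β_k²) > η_k, and 0 < η_{k+1} ≤ β_{k+1}[2γ(1−β_k²) − η_k]η_k/(β_k(1−β_k)(2γ − η_k)), then the Lyapunov function L_k := a_k‖G_γ(x_k)‖² + b_k⟨G_γ(x_k), u_k − u_0⟩ satisfies L_{k+1} ≤ L_k for all k ≥ 0. -/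
open scoped InnerProductSpace

lemma adr_quad (c1 c0 cP N1 N0 P : ℝ) (hc1 : c1 ≤ 0) (hc0 : c0 ≤ 0)
    (hdisc : cP^2 ≤ 4*(c1*c0)) (hP : P^2 ≤ N1*N0) (hN1 : 0 ≤ N1) (hN0 : 0 ≤ N0) :
    c1*N1 + c0*N0 + cP*P ≤ 0 := by
  have hs : 0 ≤ -(c1*N1) - c0*N0 := by
    have h1 : c1*N1 ≤ 0 := mul_nonpos_of_nonpos_of_nonneg hc1 hN1
    have h0 : c0*N0 ≤ 0 := mul_nonpos_of_nonpos_of_nonneg hc0 hN0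
    linarith
  have h4c : (0:ℝ) ≤ 4*(c1*c0) := le_trans (sq_nonneg cP) hdisc
  have h4 : (cP*P)^2 ≤ (-(c1*N1) - c0*N0)^2 := by
    nlinarith [mul_le_mul hdisc hP (sq_nonneg P) h4c, sq_nonneg (c1*N1 - c0*N0)]
  nlinarith [h4, hs]

/-- Scalar master lemma for the Lyapunov decrease. -/
lemma adr_master (γ β β' bk η η' a0 a1 N0 N1 P S0 S1 : ℝ)
    (hγ : 0 < γ) (hβ0 : 0 < β) (hβ1 : β < 1) (hβ'0 : 0 < β')
    (hbk : 0 < bk) (hη : 0 < η) (hη' : 0 < η')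
    (hηβ : η < 2*γ*(1-β^2))
    (hcond : η' ≤ β'*(2*γ*(1-β^2)-η)*η/(β*(1-β)*(2*γ-η)))
    (ha0 : a0 = bk*η/(2*β)) (ha1 : a1 = bk/(1-β)*η'/(2*β'))
    (hN0 : 0 ≤ N0) (hN1 : 0 ≤ N1) (hP : P^2 ≤ N1*N0)
    (hkey : γ*(N1 - 2*P + N0) ≤ -(β*(S1-S0)) - η*(P-N0)) :
    a1*N1 + (bk/(1-β))*((1-β)*S1 - η*P) ≤ a0*N0 + bk*S0 := by
  have hlam : 0 < 1-β := by linarith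
  have hm : 0 < 2*γ - η := by nlinarith [sq_nonneg β]
  have hD : 0 < 2*γ*(1-β^2) - η := by linarith
  have hβne : β ≠ 0 := ne_of_gt hβ0
  have hlamne : (1-β) ≠ 0 := ne_of_gt hlam
  have hmne : (2*γ - η) ≠ 0 := ne_of_gt hm
  have hβ'ne : β' ≠ 0 := ne_of_gt hβ'0
  have hcond' : η' * (β*(1-β)*(2*γ-η)) ≤ β'*(2*γ*(1-β^2)-η)*η := by
    rw [le_div_iff₀ (by positivity)] at hcond
    linarith
  set c1 : ℝ := a1 - bk*γ/β with hc1def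
  set c0 : ℝ := bk*(η-2*γ)/(2*β) with hc0def
  set cP : ℝ := bk*(2*γ*(1-β)-η)/(β*(1-β)) with hcPdef
  have hc0 : c0 < 0 := by
    rw [hc0def]
    apply div_neg_of_neg_of_pos
    · nlinarith
    · positivity
  have h2 : bk/(1-β)*η'/(2*β') ≤ bk*((2*γ*(1-β^2)-η)*η)/(2*β*(1-β)^2*(2*γ-η)) := by
    rw [show bk/(1-β)*η'/(2*β') = (bk*η')/((1-β)*(2*β')) by field_simp]
    rw [div_le_div_iff₀ (by positivity) (by positivity)]
    nlinarith [mul_le_mul_of_nonneg_left hcond' (by positivity : (0:ℝ) ≤ 2*bk*(1-β))]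
  have hbound : c1 ≤ bk*((2*γ*(1-β^2)-η)*η)/(2*β*(1-β)^2*(2*γ-η)) - bk*γ/β := by
    rw [hc1def, ha1]; linarith
  have heq : cP^2 = 4*((bk*((2*γ*(1-β^2)-η)*η)/(2*β*(1-β)^2*(2*γ-η)) - bk*γ/β) * c0) := by
    rw [hcPdef, hc0def]; field_simp; ring
  have hdisc : cP^2 ≤ 4*(c1*c0) := by
    rw [heq]
    have := mul_le_mul_of_nonpos_right hbound (le_of_lt hc0)
    linarith
  clear_value c1 c0 cP
  have hc1 : c1 ≤ 0 := by
    by_contra hcc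
    push_neg at hcc
    have hneg : c1*c0 < 0 := mul_neg_of_pos_of_neg hcc hc0
    linarith [sq_nonneg cP]
  have hquad : c1*N1 + c0*N0 + cP*P ≤ 0 :=
    adr_quad c1 c0 cP N1 N0 P hc1 (le_of_lt hc0) hdisc hP hN1 hN0
  have hK : 0 ≤ -(β*(S1-S0)) - η*(P-N0) - γ*(N1-2*P+N0) := by linarith
  have hbβ : 0 ≤ bk/β := by positivity
  have hidentity : a1*N1 + (bk/(1-β))*((1-β)*S1 - η*P) - (a0*N0 + bk*S0)
      = c1*N1 + c0*N0 + cP*P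
        - (bk/β)*(-(β*(S1-S0)) - η*(P-N0) - γ*(N1-2*P+N0)) := by
    rw [hc1def, hc0def, hcPdef, ha0]; field_simp; ring
  linarith [mul_nonneg hbβ hK]

lemma adr_key {p : ℕ}
    (A : EuclideanSpace ℝ (Fin p) → Set (EuclideanSpace ℝ (Fin p)))
    (B : EuclideanSpace ℝ (Fin p) → EuclideanSpace ℝ (Fin p))
    (γ : ℝ) (hγ : 0 < γ)
    (hAmono : ∀ x y u v, u ∈ A x → v ∈ A y → 0 ≤ ⟪u - v, x - y⟫_ℝ)
    (hBmono : ∀ x y, 0 ≤ ⟪B x - B y, x - y⟫_ℝ)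
    (JA : EuclideanSpace ℝ (Fin p) → EuclideanSpace ℝ (Fin p))
    (hJAres : ∀ u, (1 / γ) • (u - JA u) ∈ A (JA u))
    (Gγ : EuclideanSpace ℝ (Fin p) → EuclideanSpace ℝ (Fin p))
    (hG : ∀ x, Gγ x = (1 / γ) • (x - JA (x - γ • B x)))
    (x y u v : EuclideanSpace ℝ (Fin p))
    (hux : x + γ • B x = u) (hvy : y + γ • B y = v) :
    γ * ‖Gγ x - Gγ y‖^2 ≤ ⟪Gγ x - Gγ y, u - v⟫_ℝ := by
  have hγne : γ ≠ 0 := hγ.ne'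
  have hz : ∀ w : EuclideanSpace ℝ (Fin p), JA (w - γ • B w) = w - γ • Gγ w := by
    intro w
    have h : γ • Gγ w = w - JA (w - γ • B w) := by
      rw [hG w, smul_smul, mul_one_div_cancel hγne, one_smul]
    rw [h]
    exact (sub_sub_cancel _ _).symm
  have hA : ∀ w : EuclideanSpace ℝ (Fin p),
      Gγ w - B w ∈ A (JA (w - γ • B w)) := by
    intro w
    have h := hJAres (w - γ • B w)
    have e : (1/γ) • ((w - γ • B w) - JA (w - γ • B w)) = Gγ w - B w := by
      have h2 : (w - γ • B w) - (w - γ • Gγ w) = γ • (Gγ w - B w) := by module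
      rw [hz w, h2, smul_smul, one_div_mul_cancel hγne, one_smul]
    rwa [e] at h
  have hmono := hAmono _ _ _ _ (hA x) (hA y)
  rw [hz x, hz y] at hmono
  have h1 : (Gγ x - B x) - (Gγ y - B y) = (Gγ x - Gγ y) - (B x - B y) := by module
  have h2 : (x - γ • Gγ x) - (y - γ • Gγ y) = (x - y) - γ • (Gγ x - Gγ y) := by module
  rw [h1, h2] at hmono
  have hB := hBmono x y
  have huv : u - v = (x - y) + γ • (B x - B y) := by rw [← hux, ← hvy]; module
  rw [huv]
  rw [show ‖Gγ x - Gγ y‖^2 = ⟪Gγ x - Gγ y, Gγ x - Gγ y⟫_ℝ from (real_inner_self_eq_norm_sq _).symm]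
  set G := Gγ x - Gγ y with hGdef
  set D := x - y with hDdef
  set E := B x - B y with hEdef
  simp only [inner_sub_left, inner_sub_right, inner_add_right, real_inner_smul_right] at hmono ⊢
  rw [real_inner_comm G E] at hmono
  linarith [hB]

/-- Key estimate (Lemma 5.1) for the accelerated Douglas–Rachford splitting scheme:
under the stated parameter conditions the Lyapunov function
`L_k = a_k‖G_γ(x_k)‖² + b_k⟨G_γ(x_k), u_k − u_0⟩` is nonincreasing. -/
theorem accelerated_dr_lyapunov_nonincreasing {p : ℕ}
    (A : EuclideanSpace ℝ (Fin p) → Set (EuclideanSpace ℝ (Fin p)))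
    (B : EuclideanSpace ℝ (Fin p) → EuclideanSpace ℝ (Fin p))
    (γ : ℝ) (hγ : 0 < γ)
    (hAmono : ∀ x y u v, u ∈ A x → v ∈ A y → 0 ≤ ⟪u - v, x - y⟫_ℝ)
    (hBmono : ∀ x y, 0 ≤ ⟪B x - B y, x - y⟫_ℝ)
    (JA JB : EuclideanSpace ℝ (Fin p) → EuclideanSpace ℝ (Fin p))
    (hJAres : ∀ u, (1 / γ) • (u - JA u) ∈ A (JA u))
    (hJAfirm : ∀ u v, ‖JA u - JA v‖ ^ 2 ≤ ⟪JA u - JA v, u - v⟫_ℝ)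
    (hJBres : ∀ u, JB u + γ • B (JB u) = u)
    (Gγ : EuclideanSpace ℝ (Fin p) → EuclideanSpace ℝ (Fin p))
    (hG : ∀ x, Gγ x = (1 / γ) • (x - JA (x - γ • B x)))
    (a b β η : ℕ → ℝ)
    (hβ : ∀ k, β k ∈ Set.Ioo (0 : ℝ) 1)
    (hbpos : ∀ k, 0 < b k)
    (hb : ∀ k, b (k + 1) = b k / (1 - β k))
    (ha : ∀ k, a k = b k * η k / (2 * β k))
    (hηβ : ∀ k, η k < 2 * γ * (1 - β k ^ 2))
    (hηpos : ∀ k, 0 < η k)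
    (hcond : ∀ k, η (k + 1) ≤
      β (k + 1) * (2 * γ * (1 - β k ^ 2) - η k) * η k / (β k * (1 - β k) * (2 * γ - η k)))
    (x u : ℕ → EuclideanSpace ℝ (Fin p))
    (hu0 : u 0 = x 0 + γ • B (x 0))
    (hxk : ∀ k : ℕ, x k = JB (u k))
    (hu : ∀ k : ℕ, u (k + 1) = u k + β k • (u 0 - u k) - η k • Gγ (x k))
    (Lf : ℕ → ℝ)
    (hLf : ∀ k, Lf k = a k * ‖Gγ (x k)‖ ^ 2 + b k * ⟪Gγ (x k), u k - u 0⟫_ℝ) :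
    ∀ k : ℕ, Lf (k + 1) ≤ Lf k := by
  intro k
  obtain ⟨hβ0, hβ1⟩ := hβ k
  obtain ⟨hβ'0, _⟩ := hβ (k + 1)
  have hres : ∀ j : ℕ, x j + γ • B (x j) = u j := by
    intro j; rw [hxk j]; exact hJBres (u j)
  have hkeyv : γ * ‖Gγ (x (k + 1)) - Gγ (x k)‖ ^ 2 ≤
      ⟪Gγ (x (k + 1)) - Gγ (x k), u (k + 1) - u k⟫_ℝ :=
    adr_key A B γ hγ hAmono hBmono JA hJAres Gγ hG (x (k + 1)) (x k)
      (u (k + 1)) (u k) (hres (k + 1)) (hres k)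
  have hw : u (k + 1) - u k = -(β k • (u k - u 0)) - η k • Gγ (x k) := by
    rw [hu k]; module
  have hv : u (k + 1) - u 0 = (1 - β k) • (u k - u 0) - η k • Gγ (x k) := by
    rw [hu k]; module
  have hkey' : γ * (‖Gγ (x (k + 1))‖ ^ 2 - 2 * ⟪Gγ (x (k + 1)), Gγ (x k)⟫_ℝ + ‖Gγ (x k)‖ ^ 2) ≤
      -(β k * ((⟪Gγ (x (k + 1)), u k⟫_ℝ - ⟪Gγ (x (k + 1)), u 0⟫_ℝ)
          - (⟪Gγ (x k), u k⟫_ℝ - ⟪Gγ (x k), u 0⟫_ℝ)))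
        - η k * (⟪Gγ (x (k + 1)), Gγ (x k)⟫_ℝ - ‖Gγ (x k)‖ ^ 2) := by
    rw [hw, norm_sub_sq_real] at hkeyv
    simp only [inner_sub_left, inner_sub_right, inner_neg_right, real_inner_smul_right] at hkeyv
    rw [real_inner_self_eq_norm_sq] at hkeyv
    linarith
  have hS1 : ⟪Gγ (x (k + 1)), u (k + 1) - u 0⟫_ℝ =
      (1 - β k) * (⟪Gγ (x (k + 1)), u k⟫_ℝ - ⟪Gγ (x (k + 1)), u 0⟫_ℝ)
        - η k * ⟪Gγ (x (k + 1)), Gγ (x k)⟫_ℝ := by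
    rw [hv]
    simp only [inner_sub_right, real_inner_smul_right]
  have hP2 : ⟪Gγ (x (k + 1)), Gγ (x k)⟫_ℝ ^ 2 ≤ ‖Gγ (x (k + 1))‖ ^ 2 * ‖Gγ (x k)‖ ^ 2 := by
    have h := abs_real_inner_le_norm (Gγ (x (k + 1))) (Gγ (x k))
    nlinarith [mul_self_le_mul_self (abs_nonneg (⟪Gγ (x (k + 1)), Gγ (x k)⟫_ℝ)) h,
      sq_abs (⟪Gγ (x (k + 1)), Gγ (x k)⟫_ℝ)]
  have ha1 : a (k + 1) = b k / (1 - β k) * η (k + 1) / (2 * β (k + 1)) := by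
    rw [ha (k + 1), hb k]
  have hmain := adr_master γ (β k) (β (k + 1)) (b k) (η k) (η (k + 1)) (a k) (a (k + 1))
    (‖Gγ (x k)‖ ^ 2) (‖Gγ (x (k + 1))‖ ^ 2) (⟪Gγ (x (k + 1)), Gγ (x k)⟫_ℝ)
    (⟪Gγ (x k), u k⟫_ℝ - ⟪Gγ (x k), u 0⟫_ℝ)
    (⟪Gγ (x (k + 1)), u k⟫_ℝ - ⟪Gγ (x (k + 1)), u 0⟫_ℝ)
    hγ hβ0 hβ1 hβ'0 (hbpos k) (hηpos k) (hηpos (k + 1)) (hηβ k) (hcond k)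
    (ha k) ha1 (sq_nonneg _) (sq_nonneg _) hP2 hkey'
  rw [hLf (k + 1), hLf k, hb k, hS1,
    show ⟪Gγ (x k), u k - u 0⟫_ℝ = ⟪Gγ (x k), u k⟫_ℝ - ⟪Gγ (x k), u 0⟫_ℝ from
      inner_sub_right _ _ _]
  linarith [hmain]
end
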